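/- arXiv:2009.00650 — 6 statements merged into one kernel-verified Lean document; each statement's English description precedes it below -/
import Mathlib

section
/- A set partition π of [n] avoids the pattern 13/2 if and only if its RGF w(π) is weakly increasing. -/
open scoped Classical
noncomputable section

/-- A set partition of `[n]` is modeled as a setoid (equivalence relation) on `Fin n`. -/
abbrev SetPartition (n : ℕ) := Setoid (Fin n)

/-- Pattern containment for set partitions: `P` contains `Q` if there is a strictly
increasing map along which the block structure of `Q` is induced by that of `P`. -/
def SPContains {n k : ℕ} (P : SetPartition n) (Q : SetPartition k) : Prop :=
  ∃ f : Fin k → Fin n, StrictMono f ∧ ∀ a b : Fin k, Q.r a b ↔ P.r (f a) (f b)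

def SPAvoids {n k : ℕ} (P : SetPartition n) (Q : SetPartition k) : Prop :=
  ¬ SPContains P Q

noncomputable instance instFintypeSetoidFin (n : ℕ) : Fintype (SetPartition n) :=
  Fintype.ofInjective (fun P => P.r) fun P Q h => Setoid.ext fun a b => by simp only at h; rw [show P.r = Q.r from h]

/-- The (0-based) minimum of the block containing `i`. -/
def blockMin {n : ℕ} (P : SetPartition n) (i : Fin n) : ℕ :=
  sInf {j : ℕ | ∃ h : j < n, P.r ⟨j, h⟩ i}

/-- The (0-based) maximum of the block containing `i`. -/
def blockMax {n : ℕ} (P : SetPartition n) (i : Fin n) : ℕ :=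
  sSup {j : ℕ | ∃ h : j < n, P.r ⟨j, h⟩ i}

/-- The spread statistic: the sum over blocks of (max − min). -/
def spread {n : ℕ} (P : SetPartition n) : ℕ :=
  ∑ i ∈ Finset.univ.filter (fun i : Fin n => blockMin P i = (i : ℕ)),
    (blockMax P i - (i : ℕ))

/-- The number of blocks. -/
def blockNum {n : ℕ} (P : SetPartition n) : ℕ :=
  (Finset.univ.image (fun i : Fin n => Quotient.mk P i)).card

/-- The restricted growth function of a partition: `rgf P i` is the index (starting
from 1) of the block of `i` when the blocks are listed in order of their minima. -/
def rgf {n : ℕ} (P : SetPartition n) (i : Fin n) : ℕ :=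
  (Finset.univ.filter (fun j : Fin n => blockMin P j = (j : ℕ) ∧ (j : ℕ) ≤ blockMin P i)).card

/-- `w : Fin n → ℕ` is a restricted growth function. -/
def IsRGF {n : ℕ} (w : Fin n → ℕ) : Prop :=
  ∀ i : Fin n, 1 ≤ w i ∧ w i ≤ (Finset.univ.filter (fun j : Fin n => j < i)).sup w + 1

/-- patterns -/
def p123 : SetPartition 3 := Setoid.ker ![0, 0, 0]
def p1_2_3 : SetPartition 3 := Setoid.ker ![0, 1, 2]
def p13_2 : SetPartition 3 := Setoid.ker ![0, 1, 0]
def p12_3 : SetPartition 3 := Setoid.ker ![0, 0, 1]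
def p1_23 : SetPartition 3 := Setoid.ker ![0, 1, 1]
def p13_24 : SetPartition 4 := Setoid.ker ![0, 1, 0, 1]

/-! Listing the blocks by their minima, `rgf P i ≤ rgf P j` exactly when the block of `i` starts no
later than the block of `j`, so `rgf P` is monotone iff `i ↦ blockMin P i` is. An occurrence of
`13/2` is a triple `a < b < c` with `a ~ c` and `a ≁ b`; monotone block minima squeeze `b` into the
block of `a`, while a descent `blockMin P j < blockMin P i` with `i < j` yields the occurrence
`blockMin P j < i < j`. -/

section BlockMin

variable {n : ℕ} (P : SetPartition n)

theorem blockMin_le (i : Fin n) : blockMin P i ≤ i :=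
  Nat.sInf_le ⟨i.2, P.refl i⟩

def blockMinFin (i : Fin n) : Fin n :=
  ⟨blockMin P i, (blockMin_le P i).trans_lt i.2⟩

theorem rel_blockMinFin (i : Fin n) : P.r (blockMinFin P i) i :=
  (Nat.sInf_mem (s := {j | ∃ h : j < n, P.r ⟨j, h⟩ i}) ⟨i, i.2, P.refl i⟩).2

theorem blockMin_eq_blockMin_iff {a b : Fin n} : blockMin P a = blockMin P b ↔ P.r a b := by
  constructor
  · intro h
    have hfin : blockMinFin P a = blockMinFin P b := Fin.ext h
    exact P.trans (P.symm (rel_blockMinFin P a)) (hfin ▸ rel_blockMinFin P b)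
  · intro h
    unfold blockMin
    congr 1
    ext j
    exact exists_congr fun _ => ⟨fun hj => P.trans hj h, fun hj => P.trans hj (P.symm h)⟩

theorem blockMin_blockMinFin (i : Fin n) : blockMin P (blockMinFin P i) = blockMin P i :=
  (blockMin_eq_blockMin_iff P).2 (rel_blockMinFin P i)

theorem rgf_le_rgf {i j : Fin n} (h : blockMin P i ≤ blockMin P j) : rgf P i ≤ rgf P j :=
  Finset.card_le_card fun _ hx => by
    simp only [Finset.mem_filter] at hx ⊢
    exact ⟨hx.1, hx.2.1, hx.2.2.trans h⟩

theorem rgf_lt_rgf {i j : Fin n} (h : blockMin P i < blockMin P j) : rgf P i < rgf P j := by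
  refine Finset.card_lt_card ((Finset.ssubset_iff_of_subset ?_).2 ⟨blockMinFin P j, ?_, ?_⟩)
  · intro x hx
    simp only [Finset.mem_filter] at hx ⊢
    exact ⟨hx.1, hx.2.1, hx.2.2.trans h.le⟩
  · exact Finset.mem_filter.2 ⟨Finset.mem_univ _, blockMin_blockMinFin P j, le_rfl⟩
  · exact fun hx => (Finset.mem_filter.1 hx).2.2.not_gt h

theorem rgf_le_rgf_iff {i j : Fin n} : rgf P i ≤ rgf P j ↔ blockMin P i ≤ blockMin P j :=
  ⟨fun h => not_lt.1 fun h' => h.not_gt (rgf_lt_rgf P h'), rgf_le_rgf P⟩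

theorem monotone_rgf_iff : Monotone (rgf P) ↔ Monotone (blockMin P) := by
  simp only [Monotone, rgf_le_rgf_iff]

theorem spContains_p13_2_iff :
    SPContains P p13_2 ↔ ∃ a b c : Fin n, a < b ∧ b < c ∧ P.r a c ∧ ¬ P.r a b := by
  constructor
  · rintro ⟨f, hf, hiff⟩
    exact ⟨f 0, f 1, f 2, hf (by decide), hf (by decide), (hiff 0 2).1 rfl,
      fun h => Nat.zero_ne_one ((hiff 0 1).2 h)⟩
  · rintro ⟨a, b, c, hab, hbc, hac, hnab⟩
    have hca : P.r c a := P.symm hac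
    have hnba : ¬ P.r b a := fun h => hnab (P.symm h)
    have hnbc : ¬ P.r b c := fun h => hnba (P.trans h hca)
    have hncb : ¬ P.r c b := fun h => hnbc (P.symm h)
    refine ⟨![a, b, c], Fin.strictMono_iff_lt_succ.2 ?_, ?_⟩
    · intro i
      fin_cases i <;> simpa
    · intro x y
      rw [p13_2, Setoid.ker_def]
      fin_cases x <;> fin_cases y <;> simp [hac, hca, hnab, hnba, hnbc, hncb]

theorem monotone_blockMin_iff :
    Monotone (blockMin P) ↔ ¬ ∃ a b c : Fin n, a < b ∧ b < c ∧ P.r a c ∧ ¬ P.r a b := by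
  refine ⟨?_, fun h i j hij => ?_⟩
  · rintro hmono ⟨a, b, c, hab, hbc, hac, hnab⟩
    refine hnab ((blockMin_eq_blockMin_iff P).1 (le_antisymm (hmono hab.le) ?_))
    rw [(blockMin_eq_blockMin_iff P).2 hac]
    exact hmono hbc.le
  · by_contra! hlt
    refine h ⟨blockMinFin P j, i, j, ?_, ?_, rel_blockMinFin P j, ?_⟩
    · exact Fin.lt_def.2 (hlt.trans_le (blockMin_le P i))
    · exact lt_of_le_of_ne hij (by rintro rfl; exact lt_irrefl _ hlt)
    · rw [← blockMin_eq_blockMin_iff, blockMin_blockMinFin]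
      exact hlt.ne

end BlockMin

/-- a partition avoids `13/2` iff its RGF is weakly increasing. -/
theorem avoids_13_2_iff_monotone (n : ℕ) (P : SetPartition n) :
    SPAvoids P p13_2 ↔ Monotone (rgf P) := by
  rw [monotone_rgf_iff, monotone_blockMin_iff, SPAvoids, spContains_p13_2_iff]

end
end

section
/- For n ≥ 1, the joint generating function SB_n(12/3; q, t) = Σ_{π ∈ Π_n(12/3)} q^{spread(π)} t^{block(π)} equals t^n + Σ_{i=1}^{n-1} t^i q^{n-i} [i]_q, where [i]_q = 1 + q + … + q^{i-1}. -/
open scoped Classical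
noncomputable section

/-- The joint generating function of spread and block over partitions of `[n]`
avoiding the pattern `Q`. -/
def SB {k : ℕ} (n : ℕ) (Q : SetPartition k) (q t : ℚ) : ℚ :=
  ∑ P ∈ Finset.univ.filter (fun P : SetPartition n => SPAvoids P Q),
    q ^ spread P * t ^ blockNum P

/-!
A partition avoids `12/3` iff whenever `x < y` share a block, so does every `z > y`. So either all
blocks are singletons, or, if `s` is the least element whose block contains a smaller element `m`,
the partition consists of the block `{m} ∪ [s, n)` and singletons; it has `s` blocks and spread
`n - 1 - m`. Summing `q ^ (n - 1 - m) * t ^ s` over `m < s < n` gives the formula.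
-/

theorem Setoid.eq_ker_of_rel_apply {α : Type*} (r : Setoid α) (g : α → α) (hg : ∀ x, r x (g x))
    (hrel : ∀ x y, r (g x) (g y) → g x = g y) : r = Setoid.ker g :=
  Setoid.ext fun x y =>
    ⟨fun h => hrel x y (r.trans (r.symm (hg x)) (r.trans h (hg y))),
      fun h => r.trans (hg x) (r.trans (h ▸ r.refl _) (r.symm (hg y)))⟩

theorem p12_3_rel_iff {a b : Fin 3} : p12_3 a b ↔ ![(0 : ℕ), 0, 1] a = ![0, 0, 1] b :=
  Iff.rfl

theorem spAvoids_p12_3_iff {n : ℕ} (P : SetPartition n) :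
    SPAvoids P p12_3 ↔ ∀ x y z : Fin n, x < y → y < z → P x y → P x z := by
  refine ⟨fun hP x y z hxy hyz hxy' => by_contra fun hxz => hP ?_, ?_⟩
  · have hzx : ¬ P z x := fun h => hxz (P.symm h)
    have hyz' : ¬ P y z := fun h => hxz (P.trans hxy' h)
    have hzy : ¬ P z y := fun h => hyz' (P.symm h)
    refine ⟨![x, y, z], Fin.strictMono_iff_lt_succ.2 fun i => by fin_cases i <;> simpa, ?_⟩
    intro a b
    fin_cases a <;> fin_cases b <;>
      simp [p12_3_rel_iff, hxy', P.symm hxy', hxz, hzx, hyz', hzy]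
  · rintro hP ⟨f, hf, hpat⟩
    have h02 : P (f 0) (f 2) :=
      hP _ (f 1) _ (hf (by decide)) (hf (by decide)) ((hpat 0 1).1 rfl)
    exact absurd ((hpat 0 2).2 h02) (by simp [p12_3_rel_iff])

theorem blockMin_eq {n : ℕ} {P : SetPartition n} {i : Fin n} {j : ℕ} (hj : j < n)
    (hji : P ⟨j, hj⟩ i) (hle : ∀ k : Fin n, P k i → j ≤ k) : blockMin P i = j :=
  IsLeast.csInf_eq ⟨⟨hj, hji⟩, fun k ⟨hk, hki⟩ => hle ⟨k, hk⟩ hki⟩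

theorem blockMax_eq {n : ℕ} {P : SetPartition n} {i : Fin n} {j : ℕ} (hj : j < n)
    (hji : P ⟨j, hj⟩ i) (hle : ∀ k : Fin n, P k i → k ≤ j) : blockMax P i = j :=
  IsGreatest.csSup_eq ⟨⟨hj, hji⟩, fun k ⟨hk, hki⟩ => hle ⟨k, hk⟩ hki⟩

theorem blockNum_ker {n : ℕ} {β : Type*} (f : Fin n → β) :
    blockNum (Setoid.ker f) = (Finset.univ.image f).card := by
  rw [blockNum, ← Finset.card_image_of_injective _ (Setoid.kerLift_injective f),
    Finset.image_image]
  rfl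

theorem blockNum_bot (n : ℕ) : blockNum (⊥ : SetPartition n) = n := by
  rw [← Setoid.ker_eq_bot_iff.2 Fin.val_injective, blockNum_ker]
  convert Finset.card_image_of_injective _ Fin.val_injective
  simp

theorem spread_bot (n : ℕ) : spread (⊥ : SetPartition n) = 0 :=
  Finset.sum_eq_zero fun i _ => by
    rw [blockMax_eq i.2 (Setoid.refl' _ i) fun k hk => by rw [Setoid.bot_def] at hk; rw [hk]]
    simp

/-- For `m < s ≤ n`: the partition of `[n]` into the block `{m} ∪ [s, n)` and singletons. -/
def hookPartition (n m s : ℕ) : SetPartition n :=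
  Setoid.ker fun x : Fin n => if s ≤ (x : ℕ) then m else (x : ℕ)

section hookPartition

variable {n m s : ℕ}

theorem hookPartition_rel_iff (hm : m < s) {x y : Fin n} :
    hookPartition n m s x y ↔
      (x : ℕ) = y ∨ (((x : ℕ) = m ∨ s ≤ x) ∧ ((y : ℕ) = m ∨ s ≤ y)) := by
  rw [hookPartition, Setoid.ker_def]
  split_ifs <;> omega

theorem blockNum_hookPartition (hm : m < s) (hs : s ≤ n) :
    blockNum (hookPartition n m s) = s := by
  rw [hookPartition, blockNum_ker]
  convert Finset.card_range s
  ext j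
  simp only [Finset.mem_image, Finset.mem_univ, true_and, Finset.mem_range]
  constructor
  · rintro ⟨x, rfl⟩
    split_ifs <;> omega
  · intro hj
    exact ⟨⟨j, by omega⟩, by simp only; split_ifs <;> omega⟩

theorem spread_hookPartition (hm : m < s) (hs : s < n) :
    spread (hookPartition n m s) = n - 1 - m := by
  have hrel := @hookPartition_rel_iff n m s hm
  have hmin : ∀ i : Fin n, s ≤ (i : ℕ) ∨ (i : ℕ) = m → blockMin (hookPartition n m s) i = m :=
    fun i hi => blockMin_eq (by omega) (by simp [hrel]; omega) fun k hk => by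
      simp only [hrel] at hk; omega
  have hmax : blockMax (hookPartition n m s) ⟨m, by omega⟩ = n - 1 :=
    blockMax_eq (by omega) (by simp [hrel]; omega) fun k _ => by omega
  rw [spread, Finset.sum_eq_single_of_mem (⟨m, by omega⟩ : Fin n) (by simp [hmin]), hmax]
  intro i hi him
  simp only [Finset.mem_filter, Finset.mem_univ, true_and] at hi
  simp only [Ne, Fin.ext_iff] at him
  by_cases hsi : s ≤ (i : ℕ)
  · rw [hmin i (Or.inl hsi)] at hi
    omega
  · rw [blockMax_eq i.2 (Setoid.refl' _ i) fun k hk => by simp only [hrel] at hk; omega]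
    simp

end hookPartition

theorem eq_bot_or_eq_hookPartition {n : ℕ} (P : SetPartition n)
    (hP : ∀ x y z : Fin n, x < y → y < z → P x y → P x z) :
    P = ⊥ ∨ ∃ m s, m < s ∧ s < n ∧ P = hookPartition n m s := by
  by_cases hbot : P = ⊥
  · exact Or.inl hbot
  have hne : {y : Fin n | ∃ x < y, P x y}.Nonempty := by
    obtain ⟨a, b, hab, hab'⟩ : ∃ a b, P a b ∧ a ≠ b := by
      by_contra! h
      exact hbot (le_bot_iff.1 (Setoid.le_def.2 fun hab => by rw [Setoid.bot_def]; exact h _ _ hab))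
    rcases hab'.lt_or_gt with h | h
    exacts [⟨b, a, h, hab⟩, ⟨a, b, h, P.symm hab⟩]
  -- `s` is the least element sharing its block with a smaller one, and `m < s` is such a one
  obtain ⟨s, ⟨m, hms, hm⟩, hmin⟩ := WellFounded.has_min wellFounded_lt _ hne
  have hsep : ∀ x y : Fin n, x < s → y < s → P x y → x = y := by
    intro x y hx hy hxy
    rcases lt_trichotomy x y with h | rfl | h
    · exact (hmin y ⟨x, h, hxy⟩ hy).elim
    · rfl
    · exact (hmin x ⟨y, h, P.symm hxy⟩ hx).elim
  have htail : ∀ x, s ≤ x → P m x := fun x hx =>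
    hx.eq_or_lt.elim (fun h => h ▸ hm) fun h => hP m s x hms h hm
  right
  refine ⟨m, s, hms, s.2, ?_⟩
  rw [Setoid.eq_ker_of_rel_apply P (fun x => if s ≤ x then m else x) ?_ ?_]
  · ext x y
    simp only [Setoid.ker_def, Fin.ext_iff, apply_ite Fin.val, Fin.le_def]
    rfl
  · intro x
    split_ifs with h
    exacts [P.symm (htail x h), P.refl x]
  · intro x y
    split_ifs <;> exact hsep _ _ (by order) (by order)

theorem spAvoids_p12_3_bot (n : ℕ) : SPAvoids (⊥ : SetPartition n) p12_3 :=
  (spAvoids_p12_3_iff _).2 fun _ _ _ hxy _ h => absurd (by rwa [Setoid.bot_def] at h) hxy.ne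

theorem spAvoids_p12_3_hookPartition {n m s : ℕ} (hm : m < s) :
    SPAvoids (hookPartition n m s) p12_3 := by
  refine (spAvoids_p12_3_iff _).2 fun x y z hxy hyz h => ?_
  rw [hookPartition_rel_iff hm] at h ⊢
  rw [Fin.lt_def] at hxy hyz
  omega

theorem hookPartition_injOn (n : ℕ) :
    Set.InjOn (fun p : (_ : ℕ) × ℕ => hookPartition n p.2 p.1)
      ((Finset.Icc 1 (n - 1)).sigma Finset.range) := by
  rintro ⟨s, m⟩ hp ⟨s', m'⟩ hp' h
  simp only [Finset.coe_sigma, Set.mem_sigma_iff, Finset.coe_Icc, Set.mem_Icc,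
    Finset.coe_range, Set.mem_Iio] at hp hp'
  have hblock := congrArg blockNum h
  have hspread := congrArg spread h
  dsimp only at hblock hspread
  rw [blockNum_hookPartition hp.2 (by omega), blockNum_hookPartition hp'.2 (by omega)] at hblock
  rw [spread_hookPartition hp.2 (by omega), spread_hookPartition hp'.2 (by omega)] at hspread
  obtain rfl : s = s' := hblock
  obtain rfl : m = m' := by omega
  rfl

theorem bot_notMem_image_hookPartition (n : ℕ) :
    ⊥ ∉ ((Finset.Icc 1 (n - 1)).sigma Finset.range).image fun p => hookPartition n p.2 p.1 := by
  simp only [Finset.mem_image, Finset.mem_sigma, Finset.mem_Icc, Finset.mem_range,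
    Sigma.exists, not_exists, not_and]
  intro s m ⟨hs, hm⟩ h
  have := congrArg blockNum h
  rw [blockNum_hookPartition hm (by omega), blockNum_bot] at this
  omega

theorem filter_spAvoids_p12_3 (n : ℕ) :
    Finset.univ.filter (fun P : SetPartition n => SPAvoids P p12_3) =
      insert ⊥ (((Finset.Icc 1 (n - 1)).sigma Finset.range).image
        fun p => hookPartition n p.2 p.1) := by
  ext P
  simp only [Finset.mem_filter, Finset.mem_univ, true_and, Finset.mem_insert, Finset.mem_image,
    Finset.mem_sigma, Finset.mem_Icc, Finset.mem_range, Sigma.exists]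
  constructor
  · intro hP
    rcases eq_bot_or_eq_hookPartition P ((spAvoids_p12_3_iff P).1 hP) with h | ⟨m, s, hm, hs, rfl⟩
    exacts [Or.inl h, Or.inr ⟨s, m, ⟨⟨by omega, by omega⟩, hm⟩, rfl⟩]
  · rintro (rfl | ⟨s, m, ⟨-, hm⟩, rfl⟩)
    exacts [spAvoids_p12_3_bot n, spAvoids_p12_3_hookPartition hm]

theorem sum_range_pow_sub_one_sub {R : Type*} [Semiring R] (q : R) {n s : ℕ} (hs : s ≤ n) :
    ∑ m ∈ Finset.range s, q ^ (n - 1 - m) = q ^ (n - s) * ∑ j ∈ Finset.range s, q ^ j := by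
  rw [← Finset.sum_range_reflect, Finset.mul_sum]
  refine Finset.sum_congr rfl fun j hj => ?_
  rw [Finset.mem_range] at hj
  rw [← pow_add]
  congr 1
  omega

theorem SB_12_3_general (n : ℕ) (q t : ℚ) :
    SB n p12_3 q t =
      t ^ n + ∑ i ∈ Finset.Icc 1 (n - 1), t ^ i * q ^ (n - i) * ∑ j ∈ Finset.range i, q ^ j := by
  rw [SB, filter_spAvoids_p12_3, Finset.sum_insert (bot_notMem_image_hookPartition n),
    Finset.sum_image (hookPartition_injOn n), Finset.sum_sigma, spread_bot, blockNum_bot, pow_zero, one_mul]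
  congr 1
  refine Finset.sum_congr rfl fun s hs => ?_
  rw [Finset.mem_Icc] at hs
  calc ∑ m ∈ Finset.range s, q ^ spread (hookPartition n m s) * t ^ blockNum (hookPartition n m s)
      = ∑ m ∈ Finset.range s, q ^ (n - 1 - m) * t ^ s :=
        Finset.sum_congr rfl fun m hm => by
          rw [Finset.mem_range] at hm
          rw [spread_hookPartition hm (by omega), blockNum_hookPartition hm (by omega)]
    _ = t ^ s * q ^ (n - s) * ∑ j ∈ Finset.range s, q ^ j := by
      rw [← Finset.sum_mul, sum_range_pow_sub_one_sub q (by omega)]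
      ring

/-- the joint generating function over `Π_n(12/3)`. -/
theorem SB_12_3 (n : ℕ) (hn : 1 ≤ n) (q t : ℚ) :
    SB n p12_3 q t =
      t ^ n + ∑ i ∈ Finset.Icc 1 (n - 1), t ^ i * q ^ (n - i) * ∑ j ∈ Finset.range i, q ^ j :=
  SB_12_3_general n q t

end
end

section
/- There is a bijection τ: R_n(1/23) → R_n(12/3) between the RGFs of partitions of [n] avoiding 1/23 and those avoiding 12/3 which preserves both the spread and block statistics; in particular SB_n(1/23; q,t) = SB_n(12/3; q,t). -/
open scoped Classical
noncomputable section

/-- The largest letter of a word. -/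
def maxLetter {n : ℕ} (w : Fin n → ℕ) : ℕ := Finset.univ.sup w

/-- The (0-based) index of the first occurrence of the letter `l` in `w`. -/
def firstIdx {n : ℕ} (w : Fin n → ℕ) (l : ℕ) : ℕ := sInf {i : ℕ | ∃ h : i < n, w ⟨i, h⟩ = l}

/-- The (0-based) index of the last occurrence of the letter `l` in `w`. -/
def lastIdx {n : ℕ} (w : Fin n → ℕ) (l : ℕ) : ℕ := sSup {i : ℕ | ∃ h : i < n, w ⟨i, h⟩ = l}

/-- The spread of a word. -/
def spreadW {n : ℕ} (w : Fin n → ℕ) : ℕ :=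
  ∑ l ∈ Finset.Icc 1 (maxLetter w), (lastIdx w l - firstIdx w l)

/-- The set of RGFs of partitions of `[n]` avoiding the pattern `Q`. -/
def RSet {k : ℕ} (n : ℕ) (Q : SetPartition k) : Set (Fin n → ℕ) :=
  {w | ∃ P : SetPartition n, SPAvoids P Q ∧ rgf P = w}

/-!
Reading a partition of `[n]` backwards (`i ↦ n - 1 - i`) turns an occurrence of `1/23` into an
occurrence of `12/3` and vice versa. It exchanges the minimum and the maximum of every block, so it
keeps each block's `max - min`, hence the spread, and the number of blocks. A partition is
determined by its RGF, whose letters are its blocks, first and last occurrences of a letter being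
the minimum and maximum of the block, so `τ(w) = rgf (reverse P)` for `w = rgf P` is the bijection.
-/

theorem Function.Injective.bijOn_image_conj {α β : Type*} [Nonempty α] {f : α → β}
    (hf : Function.Injective f) {g : α → α} {s t : Set α} (hg : Set.BijOn g s t) :
    Set.BijOn (f ∘ g ∘ Function.invFun f) (f '' s) (f '' t) := by
  have hinv : Set.BijOn (Function.invFun f) (f '' s) s :=
    hf.injOn.bijOn_image.symm
      ⟨by rintro _ ⟨a, -, rfl⟩; rw [Function.leftInverse_invFun hf a],
        fun _ _ => Function.leftInverse_invFun hf _⟩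
  exact hf.injOn.bijOn_image.comp (hg.comp hinv)

namespace SetPartition

variable {n : ℕ} (P : SetPartition n)

def blockIndices (i : Fin n) : Set ℕ := {j | ∃ h : j < n, P.r ⟨j, h⟩ i}

theorem blockIndices_nonempty (i : Fin n) : (P.blockIndices i).Nonempty :=
  ⟨i, i.2, P.refl i⟩

theorem bddAbove_blockIndices (i : Fin n) : BddAbove (P.blockIndices i) :=
  ⟨n, fun _ hj => hj.1.le⟩

theorem blockIndices_congr {i j : Fin n} (h : P.r i j) :
    P.blockIndices i = P.blockIndices j := by
  ext k
  exact ⟨fun ⟨hk, hr⟩ => ⟨hk, P.trans hr h⟩, fun ⟨hk, hr⟩ => ⟨hk, P.trans hr (P.symm h)⟩⟩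

theorem blockMin_eq_sInf (i : Fin n) : blockMin P i = sInf (P.blockIndices i) := rfl

theorem blockMax_eq_sSup (i : Fin n) : blockMax P i = sSup (P.blockIndices i) := rfl

theorem blockMin_mem (i : Fin n) : blockMin P i ∈ P.blockIndices i :=
  Nat.sInf_mem (P.blockIndices_nonempty i)

theorem blockMax_mem (i : Fin n) : blockMax P i ∈ P.blockIndices i :=
  Nat.sSup_mem (P.blockIndices_nonempty i) (P.bddAbove_blockIndices i)

theorem blockMin_le (i : Fin n) : blockMin P i ≤ i := Nat.sInf_le ⟨i.2, P.refl i⟩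

theorem le_blockMax (i : Fin n) : (i : ℕ) ≤ blockMax P i :=
  le_csSup (P.bddAbove_blockIndices i) ⟨i.2, P.refl i⟩

theorem blockMax_lt (i : Fin n) : blockMax P i < n := (P.blockMax_mem i).1

theorem blockMin_lt (i : Fin n) : blockMin P i < n := (P.blockMin_le i).trans_lt i.2

theorem blockMin_congr {i j : Fin n} (h : P.r i j) : blockMin P i = blockMin P j := by
  rw [blockMin_eq_sInf, blockMin_eq_sInf, P.blockIndices_congr h]

theorem blockMax_congr {i j : Fin n} (h : P.r i j) : blockMax P i = blockMax P j := by
  rw [blockMax_eq_sSup, blockMax_eq_sSup, P.blockIndices_congr h]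

def blockMinFin (i : Fin n) : Fin n := ⟨blockMin P i, P.blockMin_lt i⟩

def blockMaxFin (i : Fin n) : Fin n := ⟨blockMax P i, P.blockMax_lt i⟩

theorem rel_blockMinFin (i : Fin n) : P.r (P.blockMinFin i) i := (P.blockMin_mem i).2

theorem rel_blockMaxFin (i : Fin n) : P.r (P.blockMaxFin i) i := (P.blockMax_mem i).2

theorem rel_of_blockMin_eq {i j : Fin n} (h : blockMin P i = blockMin P j) : P.r i j := by
  have hfin : P.blockMinFin i = P.blockMinFin j := Fin.ext h
  exact P.trans (P.symm (P.rel_blockMinFin i)) (hfin ▸ P.rel_blockMinFin j)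

def blockMins : Finset (Fin n) := Finset.univ.filter fun i => blockMin P i = i

def blockMaxs : Finset (Fin n) := Finset.univ.filter fun i => blockMax P i = i

theorem mem_blockMins {i : Fin n} : i ∈ P.blockMins ↔ blockMin P i = i := by simp [blockMins]

theorem mem_blockMaxs {i : Fin n} : i ∈ P.blockMaxs ↔ blockMax P i = i := by simp [blockMaxs]

theorem blockMinFin_mem_blockMins (i : Fin n) : P.blockMinFin i ∈ P.blockMins :=
  P.mem_blockMins.2 (P.blockMin_congr (P.rel_blockMinFin i))

theorem blockMaxFin_mem_blockMaxs (i : Fin n) : P.blockMaxFin i ∈ P.blockMaxs :=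
  P.mem_blockMaxs.2 (P.blockMax_congr (P.rel_blockMaxFin i))

theorem eq_of_mem_blockMins {i j : Fin n} (hi : i ∈ P.blockMins) (hj : j ∈ P.blockMins)
    (h : P.r i j) : i = j :=
  Fin.ext <| (P.mem_blockMins.1 hi).symm.trans <| (P.blockMin_congr h).trans (P.mem_blockMins.1 hj)

theorem sum_blockMins_eq_sum_blockMaxs {M : Type*} [AddCommMonoid M] (f : Fin n → M)
    (hf : ∀ i j, P.r i j → f i = f j) : ∑ i ∈ P.blockMins, f i = ∑ i ∈ P.blockMaxs, f i := by
  refine Finset.sum_nbij' P.blockMaxFin P.blockMinFin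
    (fun i _ => P.blockMaxFin_mem_blockMaxs i) (fun i _ => P.blockMinFin_mem_blockMins i)
    (fun i hi => ?_) (fun i hi => ?_)
    (fun i _ => (hf _ _ (P.rel_blockMaxFin i)).symm)
  · exact Fin.ext ((P.blockMin_congr (P.rel_blockMaxFin i)).trans (P.mem_blockMins.1 hi))
  · exact Fin.ext ((P.blockMax_congr (P.rel_blockMinFin i)).trans (P.mem_blockMaxs.1 hi))

theorem spread_eq_sum_blockMins :
    spread P = ∑ i ∈ P.blockMins, (blockMax P i - blockMin P i) :=
  Finset.sum_congr rfl fun i hi => by rw [P.mem_blockMins.1 hi]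

theorem card_blockMins : P.blockMins.card = blockNum P := by
  refine Finset.card_bij (fun i _ => Quotient.mk P i)
    (fun i _ => Finset.mem_image_of_mem _ (Finset.mem_univ i))
    (fun i hi j hj h => P.eq_of_mem_blockMins hi hj (Quotient.exact h)) ?_
  intro b hb
  obtain ⟨k, -, rfl⟩ := Finset.mem_image.1 hb
  exact ⟨P.blockMinFin k, P.blockMinFin_mem_blockMins k, Quotient.sound (P.rel_blockMinFin k)⟩

theorem rgf_lt_rgf_of_blockMin_lt {i j : Fin n} (h : blockMin P i < blockMin P j) :
    rgf P i < rgf P j := by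
  refine Finset.card_lt_card
    ⟨Finset.monotone_filter_right _ fun k _ hk => ⟨hk.1, hk.2.trans h.le⟩, fun hsub => ?_⟩
  have hj := hsub (Finset.mem_filter.2 ⟨Finset.mem_univ (P.blockMinFin j),
    P.mem_blockMins.1 (P.blockMinFin_mem_blockMins j), le_rfl⟩)
  exact absurd (Finset.mem_filter.1 hj).2.2 h.not_ge

theorem rgf_eq_rgf_iff {i j : Fin n} : rgf P i = rgf P j ↔ P.r i j := by
  refine ⟨fun h => ?_, fun h => by simp only [rgf, P.blockMin_congr h]⟩
  rcases lt_trichotomy (blockMin P i) (blockMin P j) with hlt | heq | hgt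
  · exact absurd h (P.rgf_lt_rgf_of_blockMin_lt hlt).ne
  · exact P.rel_of_blockMin_eq heq
  · exact absurd h.symm (P.rgf_lt_rgf_of_blockMin_lt hgt).ne

theorem rgf_injective : Function.Injective (rgf : SetPartition n → Fin n → ℕ) := fun P Q h =>
  Setoid.ext fun i j => by rw [← P.rgf_eq_rgf_iff, ← Q.rgf_eq_rgf_iff, h]

theorem rgf_mem_Icc (i : Fin n) : rgf P i ∈ Finset.Icc 1 P.blockMins.card := by
  refine Finset.mem_Icc.2 ⟨Finset.card_pos.2 ⟨P.blockMinFin i, ?_⟩,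
    Finset.card_le_card fun k hk => P.mem_blockMins.2 (Finset.mem_filter.1 hk).2.1⟩
  exact Finset.mem_filter.2 ⟨Finset.mem_univ _,
    P.mem_blockMins.1 (P.blockMinFin_mem_blockMins i), le_rfl⟩

theorem injOn_rgf_blockMins : Set.InjOn (rgf P) P.blockMins := fun _ hi _ hj h =>
  P.eq_of_mem_blockMins hi hj (P.rgf_eq_rgf_iff.1 h)

theorem image_rgf_blockMins : P.blockMins.image (rgf P) = Finset.Icc 1 P.blockMins.card :=
  Finset.eq_of_subset_of_card_le (Finset.image_subset_iff.2 fun i _ => P.rgf_mem_Icc i) <| by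
    rw [Nat.card_Icc, Nat.add_sub_cancel, Finset.card_image_of_injOn P.injOn_rgf_blockMins]

theorem maxLetter_rgf : maxLetter (rgf P) = blockNum P := by
  rw [← card_blockMins]
  refine le_antisymm (Finset.sup_le fun i _ => (Finset.mem_Icc.1 (P.rgf_mem_Icc i)).2) ?_
  rcases Nat.eq_zero_or_pos P.blockMins.card with h0 | hpos
  · exact h0.le.trans (Nat.zero_le _)
  · obtain ⟨i, -, hi⟩ := Finset.mem_image.1
      (P.image_rgf_blockMins ▸ Finset.mem_Icc.2 ⟨hpos, le_rfl⟩)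
    exact hi ▸ Finset.le_sup (Finset.mem_univ i)

theorem firstIdx_rgf (i : Fin n) : firstIdx (rgf P) (rgf P i) = blockMin P i := by
  simp only [firstIdx, blockMin, P.rgf_eq_rgf_iff]

theorem lastIdx_rgf (i : Fin n) : lastIdx (rgf P) (rgf P i) = blockMax P i := by
  simp only [lastIdx, blockMax, P.rgf_eq_rgf_iff]

theorem spreadW_rgf : spreadW (rgf P) = spread P := by
  rw [spreadW, maxLetter_rgf, ← card_blockMins, ← image_rgf_blockMins,
    Finset.sum_image P.injOn_rgf_blockMins, spread_eq_sum_blockMins]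
  exact Finset.sum_congr rfl fun i _ => by rw [firstIdx_rgf, lastIdx_rgf]

def reverse : SetPartition n := Setoid.comap Fin.rev P

theorem reverse_rel {i j : Fin n} : P.reverse.r i j ↔ P.r i.rev j.rev := Iff.rfl

@[simp]
theorem reverse_reverse : P.reverse.reverse = P :=
  Setoid.ext fun i j => by rw [reverse_rel, reverse_rel, Fin.rev_rev, Fin.rev_rev]

theorem mem_blockIndices_reverse {i : Fin n} {j : ℕ} :
    j ∈ P.reverse.blockIndices i ↔ j < n ∧ n - 1 - j ∈ P.blockIndices i.rev := by
  have hrev (hj : j < n) : (⟨j, hj⟩ : Fin n).rev = ⟨n - 1 - j, by omega⟩ :=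
    Fin.ext (by simp only [Fin.val_rev]; omega)
  exact ⟨fun ⟨hj, hr⟩ => ⟨hj, by omega, hrev hj ▸ P.reverse_rel.1 hr⟩,
    fun ⟨hj, _, hr⟩ => ⟨hj, P.reverse_rel.2 (hrev hj ▸ hr)⟩⟩

theorem blockMin_reverse (i : Fin n) : blockMin P.reverse i = n - 1 - blockMax P i.rev := by
  have hlt := P.blockMax_lt i.rev
  refine IsLeast.csInf_eq ⟨P.mem_blockIndices_reverse.2 ⟨by omega, ?_⟩, fun j hj => ?_⟩
  · rw [show n - 1 - (n - 1 - blockMax P i.rev) = blockMax P i.rev by omega]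
    exact P.blockMax_mem i.rev
  · obtain ⟨hj, hmem⟩ := P.mem_blockIndices_reverse.1 hj
    have := le_csSup (P.bddAbove_blockIndices i.rev) hmem
    rw [← blockMax_eq_sSup] at this
    omega

theorem blockMax_reverse (i : Fin n) : blockMax P.reverse i = n - 1 - blockMin P i.rev := by
  have h := P.reverse.blockMin_reverse i.rev
  rw [reverse_reverse, Fin.rev_rev] at h
  have := P.reverse.blockMax_lt i
  have := P.blockMin_le i.rev
  omega

theorem mem_blockMins_reverse {i : Fin n} :
    i ∈ P.reverse.blockMins ↔ i.rev ∈ P.blockMaxs := by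
  rw [mem_blockMins, mem_blockMaxs, blockMin_reverse, Fin.val_rev]
  have := P.blockMax_lt i.rev
  omega

theorem sum_blockMins_reverse {M : Type*} [AddCommMonoid M] (f : Fin n → M)
    (hf : ∀ i j, P.r i j → f i = f j) :
    ∑ i ∈ P.reverse.blockMins, f i.rev = ∑ i ∈ P.blockMins, f i := by
  rw [P.sum_blockMins_eq_sum_blockMaxs f hf]
  exact Finset.sum_nbij' Fin.rev Fin.rev (fun i hi => P.mem_blockMins_reverse.1 hi)
    (fun i hi => P.mem_blockMins_reverse.2 (by rwa [Fin.rev_rev])) (fun i _ => Fin.rev_rev i)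
    (fun i _ => Fin.rev_rev i) (fun _ _ => rfl)

theorem spread_reverse : spread P.reverse = spread P := by
  rw [spread_eq_sum_blockMins, spread_eq_sum_blockMins,
    ← P.sum_blockMins_reverse (fun i => blockMax P i - blockMin P i)
      fun i j h => by rw [P.blockMax_congr h, P.blockMin_congr h]]
  refine Finset.sum_congr rfl fun i _ => ?_
  rw [blockMax_reverse, blockMin_reverse]
  have := P.blockMax_lt i.rev
  have := P.blockMin_le i.rev
  have := P.le_blockMax i.rev
  omega

theorem blockNum_reverse : blockNum P.reverse = blockNum P := by
  rw [← card_blockMins, ← card_blockMins, Finset.card_eq_sum_ones, Finset.card_eq_sum_ones]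
  exact P.sum_blockMins_reverse (fun _ => 1) fun _ _ _ => rfl

end SetPartition

theorem SPContains.reverse {m k : ℕ} {P : SetPartition m} {Q : SetPartition k}
    (h : SPContains P Q) : SPContains P.reverse Q.reverse := by
  obtain ⟨f, hmono, hf⟩ := h
  exact ⟨fun a => (f a.rev).rev, fun a b hab => Fin.rev_lt_rev.2 (hmono (Fin.rev_lt_rev.2 hab)),
    fun a b => by simp only [SetPartition.reverse_rel, Fin.rev_rev]; exact hf a.rev b.rev⟩

theorem spAvoids_reverse_iff {m k : ℕ} {P : SetPartition m} {Q : SetPartition k} :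
    SPAvoids P.reverse Q.reverse ↔ SPAvoids P Q :=
  not_congr ⟨fun h => by simpa using h.reverse, SPContains.reverse⟩

theorem reverse_p1_23 : p1_23.reverse = p12_3 :=
  Setoid.ext (by decide : ∀ a b : Fin 3,
    ![(0 : ℕ), 1, 1] a.rev = ![0, 1, 1] b.rev ↔ ![(0 : ℕ), 0, 1] a = ![0, 0, 1] b)

theorem spAvoids_p12_3_reverse_iff {n : ℕ} {P : SetPartition n} :
    SPAvoids P.reverse p12_3 ↔ SPAvoids P p1_23 := by
  rw [← reverse_p1_23, spAvoids_reverse_iff]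

theorem spAvoids_p1_23_reverse_iff {n : ℕ} {P : SetPartition n} :
    SPAvoids P.reverse p1_23 ↔ SPAvoids P p12_3 := by
  rw [← spAvoids_p12_3_reverse_iff, SetPartition.reverse_reverse]

theorem bijOn_reverse_avoiders (n : ℕ) :
    Set.BijOn SetPartition.reverse {P : SetPartition n | SPAvoids P p1_23}
      {P | SPAvoids P p12_3} :=
  Set.InvOn.bijOn ⟨fun P _ => P.reverse_reverse, fun P _ => P.reverse_reverse⟩
    (fun _ => spAvoids_p12_3_reverse_iff.2) (fun _ => spAvoids_p1_23_reverse_iff.2)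

theorem RSet_eq_image {n k : ℕ} (Q : SetPartition k) :
    RSet n Q = rgf '' {P : SetPartition n | SPAvoids P Q} := rfl

/-- there is a bijection `τ : R_n(1/23) → R_n(12/3)` preserving spread and
block; in particular the joint generating functions agree. -/
theorem exists_statPreserving_bijection (n : ℕ) :
    (∃ τ : (Fin n → ℕ) → (Fin n → ℕ),
      Set.BijOn τ (RSet n p1_23) (RSet n p12_3) ∧
      ∀ w ∈ RSet n p1_23, spreadW (τ w) = spreadW w ∧ maxLetter (τ w) = maxLetter w) ∧
    ∀ q t : ℚ, SB n p1_23 q t = SB n p12_3 q t := by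
  refine ⟨⟨rgf ∘ SetPartition.reverse ∘ Function.invFun rgf, ?_, ?_⟩, fun q t => ?_⟩
  · rw [RSet_eq_image, RSet_eq_image]
    exact SetPartition.rgf_injective.bijOn_image_conj (bijOn_reverse_avoiders n)
  · rintro _ ⟨P, -, rfl⟩
    simp only [Function.comp_apply, Function.leftInverse_invFun SetPartition.rgf_injective P,
      SetPartition.spreadW_rgf, SetPartition.maxLetter_rgf, P.spread_reverse, P.blockNum_reverse,
      and_self]
  · refine Finset.sum_nbij' SetPartition.reverse SetPartition.reverse
      (by simp [spAvoids_p12_3_reverse_iff]) (by simp [spAvoids_p1_23_reverse_iff])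
      (fun P _ => P.reverse_reverse) (fun P _ => P.reverse_reverse)
      fun P _ => by rw [P.spread_reverse, P.blockNum_reverse]
end
end

section
/- An RGF w of a partition of [n] maximizes spread among RGFs in R_n(123) if and only if it has the form w = 1 2 … ⌈n/2⌉ σ where σ is a permutation (as a word) of the set {1, 2, …, ⌊n/2⌋}. -/
open scoped Classical
noncomputable section

/-- A list of naturals is a restricted growth function. -/
def IsRGFL (w : List ℕ) : Prop :=
  ∀ i : ℕ, i < w.length → 1 ≤ w.getD i 0 ∧ w.getD i 0 ≤ (w.take i).foldr max 0 + 1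

/-- The largest letter of a word. -/
def maxLetterL (w : List ℕ) : ℕ := w.foldr max 0

/-- The (0-based) index of the first occurrence of the letter `l`. -/
def firstIdxL (w : List ℕ) (l : ℕ) : ℕ := sInf {i : ℕ | i < w.length ∧ w.getD i 0 = l}

/-- The (0-based) index of the last occurrence of the letter `l`. -/
def lastIdxL (w : List ℕ) (l : ℕ) : ℕ := sSup {i : ℕ | i < w.length ∧ w.getD i 0 = l}

/-- The spread of a word. -/
def spreadL (w : List ℕ) : ℕ :=
  ∑ l ∈ Finset.Icc 1 (maxLetterL w), (lastIdxL w l - firstIdxL w l)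

/-- A word avoids the subword pattern `1212`. -/
def Avoids1212L (w : List ℕ) : Prop :=
  ¬ ∃ i j k l : ℕ, i < j ∧ j < k ∧ k < l ∧ l < w.length ∧
      w.getD i 0 = w.getD k 0 ∧ w.getD j 0 = w.getD l 0 ∧ w.getD i 0 ≠ w.getD j 0

/-!
Only letters occurring twice contribute to the spread, each with the distance between its
first and last occurrence. If `k` letters occur twice, their first occurrences are `k` distinct
positions, summing to at least `0 + ⋯ + (k - 1)`, and their last occurrences sum to at most
`(n - k) + ⋯ + (n - 1)`; hence the spread is at most `k (n - k)`. In an RGF every letter up to the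
maximum `m` occurs, so `n = m + k` and `k ≤ ⌊n/2⌋`, giving spread `≤ ⌊n/2⌋ ⌈n/2⌉`.

Equality forces `k = ⌊n/2⌋`, the first occurrences to be the first `k` positions and the last
occurrences the last `k` positions. Then the first `⌈n/2⌉` letters are pairwise distinct,
which in an RGF means they are `1 2 … ⌈n/2⌉`, and the remaining letters are the doubled ones,
`1, …, ⌊n/2⌋`, each once. Conversely every such word attains the bound.
-/
open Finset

section Positions

variable {w : List ℕ} {l i : ℕ}

theorem map_getD_range {α : Type*} (u : List α) (d : α) :
    (List.range u.length).map (u.getD · d) = u := by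
  apply List.ext_getElem <;> simp +contextual

def positions (w : List ℕ) (l : ℕ) : Finset ℕ := {i ∈ range w.length | w.getD i 0 = l}

theorem mem_positions : i ∈ positions w l ↔ i < w.length ∧ w.getD i 0 = l := by
  simp [positions]

theorem coe_positions : (positions w l : Set ℕ) = {i | i < w.length ∧ w.getD i 0 = l} := by
  ext; simp [mem_positions]

theorem count_eq_card_positions (w : List ℕ) (l : ℕ) : w.count l = #(positions w l) := by
  conv_lhs => rw [← map_getD_range w 0]
  rw [← Multiset.coe_count, ← Multiset.map_coe, Multiset.count_map]
  simp only [positions, card_def, filter_val, eq_comm]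
  rfl

theorem positions_nonempty (h : l ∈ w) : (positions w l).Nonempty := by
  rw [← card_pos, ← count_eq_card_positions]
  exact List.count_pos_iff.2 h

theorem firstIdxL_eq_min' (h : l ∈ w) :
    firstIdxL w l = (positions w l).min' (positions_nonempty h) := by
  rw [firstIdxL, ← coe_positions, (positions_nonempty h).csInf_eq_min']

theorem lastIdxL_eq_max' (h : l ∈ w) :
    lastIdxL w l = (positions w l).max' (positions_nonempty h) := by
  rw [lastIdxL, ← coe_positions, (positions_nonempty h).csSup_eq_max']

theorem firstIdxL_mem_positions (h : l ∈ w) : firstIdxL w l ∈ positions w l := by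
  rw [firstIdxL_eq_min' h]; exact min'_mem _ _

theorem lastIdxL_mem_positions (h : l ∈ w) : lastIdxL w l ∈ positions w l := by
  rw [lastIdxL_eq_max' h]; exact max'_mem _ _

theorem firstIdxL_le (hi : i < w.length) (hl : w.getD i 0 = l) : firstIdxL w l ≤ i :=
  Nat.sInf_le ⟨hi, hl⟩

theorem le_lastIdxL (hi : i < w.length) (hl : w.getD i 0 = l) : i ≤ lastIdxL w l :=
  le_csSup ⟨w.length, fun _ hj => hj.1.le⟩ ⟨hi, hl⟩

theorem firstIdxL_le_lastIdxL (h : l ∈ w) : firstIdxL w l ≤ lastIdxL w l := by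
  rw [firstIdxL_eq_min' h, lastIdxL_eq_max' h]; exact min'_le_max' _ _

theorem lastIdxL_eq_firstIdxL_of_count_le_one (h : w.count l ≤ 1) :
    lastIdxL w l = firstIdxL w l := by
  rw [count_eq_card_positions, card_le_one] at h
  have hsub : ({i | i < w.length ∧ w.getD i 0 = l} : Set ℕ).Subsingleton := by
    rw [← coe_positions]; exact h
  rcases hsub.eq_empty_or_singleton with h | ⟨i, h⟩
  · -- an absent letter has both indices equal to the junk value `sSup ∅ = sInf ∅ = 0`
    rw [lastIdxL, firstIdxL, h, csSup_empty, Nat.sInf_empty]; rfl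
  · rw [lastIdxL, firstIdxL, h, csSup_singleton, csInf_singleton]

end Positions

section ExtremalSums

variable {s : Finset ℕ} {n : ℕ}

theorem sum_range_card_le_sum (s : Finset ℕ) : ∑ i ∈ range #s, i ≤ ∑ i ∈ s, i := by
  induction s using Finset.induction_on_max with
  | empty => simp
  | insert a s ha ih =>
    have hcard : #s ≤ a := by simpa using card_le_card fun x hx => mem_range.2 (ha x hx)
    rw [card_insert_of_notMem fun h => (ha a h).false, sum_insert fun h => (ha a h).false,
      sum_range_succ]
    omega

theorem eq_range_card_of_sum_le (h : ∑ i ∈ s, i ≤ ∑ i ∈ range #s, i) : s = range #s := by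
  induction s using Finset.induction_on_max with
  | empty => simp
  | insert a s ha ih =>
    have hcard : #s ≤ a := by simpa using card_le_card fun x hx => mem_range.2 (ha x hx)
    have hbot := sum_range_card_le_sum s
    rw [card_insert_of_notMem fun h => (ha a h).false, sum_insert fun h => (ha a h).false,
      sum_range_succ] at h
    rw [card_insert_of_notMem fun h => (ha a h).false, range_add_one, ← ih (by omega),
      show a = #s by omega]

theorem insert_Ico_sub_card {c n : ℕ} (h : c < n) :
    insert (n - (c + 1)) (Ico (n - c) n) = Ico (n - (c + 1)) n := by
  rw [show n - c = n - (c + 1) + 1 by omega, insert_Ico_add_one_left_eq_Ico (by omega)]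

theorem sum_le_sum_Ico_sub_card (hs : s ⊆ range n) :
    ∑ i ∈ s, i ≤ ∑ i ∈ Ico (n - #s) n, i := by
  induction s using Finset.induction_on_min with
  | empty => simp
  | insert a s ha ih =>
    have has : a < n := mem_range.1 (hs (mem_insert_self a s))
    have hcard : #s ≤ n - a - 1 := by
      simpa using card_le_card fun x hx =>
        mem_Ioo.2 ⟨ha x hx, mem_range.1 (hs (mem_insert_of_mem hx))⟩
    have ih := ih ((subset_insert a s).trans hs)
    rw [card_insert_of_notMem fun h => (ha a h).false, sum_insert fun h => (ha a h).false,
      ← insert_Ico_sub_card (by omega), sum_insert (by rw [mem_Ico]; omega)]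
    omega

theorem eq_Ico_sub_card_of_sum_le (hs : s ⊆ range n)
    (h : ∑ i ∈ Ico (n - #s) n, i ≤ ∑ i ∈ s, i) : s = Ico (n - #s) n := by
  induction s using Finset.induction_on_min with
  | empty => simp
  | insert a s ha ih =>
    have has : a < n := mem_range.1 (hs (mem_insert_self a s))
    have hcard : #s ≤ n - a - 1 := by
      simpa using card_le_card fun x hx =>
        mem_Ioo.2 ⟨ha x hx, mem_range.1 (hs (mem_insert_of_mem hx))⟩
    have htop := sum_le_sum_Ico_sub_card ((subset_insert a s).trans hs)
    rw [card_insert_of_notMem fun h => (ha a h).false, sum_insert fun h => (ha a h).false,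
      ← insert_Ico_sub_card (by omega), sum_insert (by rw [mem_Ico]; omega)] at h
    rw [card_insert_of_notMem fun h => (ha a h).false, ← insert_Ico_sub_card (by omega),
      ← ih ((subset_insert a s).trans hs) (by omega), show a = n - (#s + 1) by omega]

theorem sum_Ico_sub_eq {k : ℕ} (hk : k ≤ n) :
    ∑ i ∈ Ico (n - k) n, i = k * (n - k) + ∑ i ∈ range k, i := by
  rw [sum_Ico_eq_sum_range, sum_add_distrib, sum_const, card_range, smul_eq_mul,
    show n - (n - k) = k by omega]

end ExtremalSums

section Arcs

variable {w : List ℕ} {l : ℕ}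

theorem getD_firstIdxL (h : l ∈ w) : w.getD (firstIdxL w l) 0 = l :=
  (mem_positions.1 (firstIdxL_mem_positions h)).2

theorem getD_lastIdxL (h : l ∈ w) : w.getD (lastIdxL w l) 0 = l :=
  (mem_positions.1 (lastIdxL_mem_positions h)).2

theorem firstIdxL_lt_length (h : l ∈ w) : firstIdxL w l < w.length :=
  (mem_positions.1 (firstIdxL_mem_positions h)).1

theorem lastIdxL_lt_length (h : l ∈ w) : lastIdxL w l < w.length :=
  (mem_positions.1 (lastIdxL_mem_positions h)).1

def twiceLetters (w : List ℕ) : Finset ℕ := {l ∈ Icc 1 (maxLetterL w) | w.count l = 2}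

def openers (w : List ℕ) : Finset ℕ := (twiceLetters w).image (firstIdxL w)

def closers (w : List ℕ) : Finset ℕ := (twiceLetters w).image (lastIdxL w)

theorem mem_of_mem_twiceLetters (h : l ∈ twiceLetters w) : l ∈ w := by
  rw [twiceLetters, mem_filter] at h
  exact List.count_pos_iff.1 (by omega)

theorem injOn_firstIdxL : Set.InjOn (firstIdxL w) (twiceLetters w) := fun l hl l' hl' e => by
  rw [← getD_firstIdxL (mem_of_mem_twiceLetters hl), e,
    getD_firstIdxL (mem_of_mem_twiceLetters hl')]

theorem injOn_lastIdxL : Set.InjOn (lastIdxL w) (twiceLetters w) := fun l hl l' hl' e => by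
  rw [← getD_lastIdxL (mem_of_mem_twiceLetters hl), e,
    getD_lastIdxL (mem_of_mem_twiceLetters hl')]

theorem card_openers (w : List ℕ) : #(openers w) = #(twiceLetters w) :=
  card_image_of_injOn injOn_firstIdxL

theorem card_closers (w : List ℕ) : #(closers w) = #(twiceLetters w) :=
  card_image_of_injOn injOn_lastIdxL

theorem openers_subset_range (w : List ℕ) : openers w ⊆ range w.length := by
  simp only [openers, image_subset_iff, mem_range]
  exact fun l hl => firstIdxL_lt_length (mem_of_mem_twiceLetters hl)

theorem closers_subset_range (w : List ℕ) : closers w ⊆ range w.length := by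
  simp only [closers, image_subset_iff, mem_range]
  exact fun l hl => lastIdxL_lt_length (mem_of_mem_twiceLetters hl)

theorem card_twiceLetters_le_length (w : List ℕ) : #(twiceLetters w) ≤ w.length := by
  simpa [card_closers] using card_le_card (closers_subset_range w)

theorem spreadL_eq_sum_twiceLetters (h2 : ∀ l, w.count l ≤ 2) :
    spreadL w = ∑ l ∈ twiceLetters w, (lastIdxL w l - firstIdxL w l) := by
  rw [spreadL, twiceLetters, sum_filter_of_ne]
  intro l _ hne
  by_contra hc
  have := h2 l
  exact hne (by rw [lastIdxL_eq_firstIdxL_of_count_le_one (by omega), Nat.sub_self])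

theorem spreadL_add_sum_openers (h2 : ∀ l, w.count l ≤ 2) :
    spreadL w + ∑ i ∈ openers w, i = ∑ i ∈ closers w, i := by
  rw [spreadL_eq_sum_twiceLetters h2, openers, closers, sum_image injOn_firstIdxL,
    sum_image injOn_lastIdxL, ← sum_add_distrib]
  exact sum_congr rfl fun l hl =>
    Nat.sub_add_cancel (firstIdxL_le_lastIdxL (mem_of_mem_twiceLetters hl))

theorem spreadL_le_card_mul (h2 : ∀ l, w.count l ≤ 2) :
    spreadL w ≤ #(twiceLetters w) * (w.length - #(twiceLetters w)) := by
  have hsum := spreadL_add_sum_openers h2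
  have hF := sum_range_card_le_sum (openers w)
  have hL := sum_le_sum_Ico_sub_card (closers_subset_range w)
  rw [card_openers] at hF
  rw [card_closers, sum_Ico_sub_eq (card_twiceLetters_le_length w)] at hL
  omega

theorem openers_eq_and_closers_eq_of_spreadL_eq (h2 : ∀ l, w.count l ≤ 2)
    (h : spreadL w = #(twiceLetters w) * (w.length - #(twiceLetters w))) :
    openers w = range #(twiceLetters w) ∧
      closers w = Ico (w.length - #(twiceLetters w)) w.length := by
  have hsum := spreadL_add_sum_openers h2
  have hF := sum_range_card_le_sum (openers w)
  have hL := sum_le_sum_Ico_sub_card (closers_subset_range w)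
  have hF' := eq_range_card_of_sum_le (s := openers w)
  have hL' := eq_Ico_sub_card_of_sum_le (closers_subset_range w)
  rw [card_openers] at hF hF'
  rw [card_closers] at hL hL'
  rw [sum_Ico_sub_eq (card_twiceLetters_le_length w)] at hL hL'
  exact ⟨hF' (by omega), hL' (by omega)⟩

end Arcs

section RestrictedGrowth

variable {w : List ℕ} {x : ℕ}

theorem maxLetterL_append (u v : List ℕ) :
    maxLetterL (u ++ v) = max (maxLetterL u) (maxLetterL v) := by
  induction u with
  | nil => simp [maxLetterL]
  | cons a t ih =>
    simp only [maxLetterL, List.cons_append, List.foldr_cons] at ih ⊢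
    rw [ih, max_assoc]

theorem le_maxLetterL (h : x ∈ w) : x ≤ maxLetterL w := List.le_max_of_le h le_rfl

theorem maxLetterL_le {c : ℕ} (h : ∀ x ∈ w, x ≤ c) : maxLetterL w ≤ c :=
  List.max_le_of_forall_le w c h

theorem getD_le_maxLetterL_take {i j : ℕ} (hji : j < i) (hj : j < w.length) :
    w.getD j 0 ≤ maxLetterL (w.take i) :=
  le_maxLetterL <|
    List.mem_take_iff_getElem.2 ⟨j, lt_min hji hj, (List.getD_eq_getElem _ _ hj).symm⟩

theorem card_twiceLetters_le_maxLetterL (w : List ℕ) : #(twiceLetters w) ≤ maxLetterL w :=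
  (card_le_card (filter_subset _ _)).trans (by simp)

theorem IsRGFL.getElem_le (hw : IsRGFL w) {i : ℕ} (hi : i < w.length) :
    w[i] ≤ maxLetterL (w.take i) + 1 := by
  have := (hw i hi).2
  rwa [List.getD_eq_getElem _ _ hi] at this

theorem IsRGFL.one_le (hw : IsRGFL w) (hx : x ∈ w) : 1 ≤ x := by
  obtain ⟨i, hi, rfl⟩ := List.getElem_of_mem hx
  simpa only [List.getD_eq_getElem _ _ hi] using (hw i hi).1

theorem IsRGFL.mem_of_le_maxLetterL (hw : IsRGFL w) (h1 : 1 ≤ x) (hx : x ≤ maxLetterL w) :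
    x ∈ w := by
  suffices ∀ j ≤ w.length, x ≤ maxLetterL (w.take j) → x ∈ w.take j by
    simpa using this w.length le_rfl (by simpa using hx)
  intro j
  induction j with
  | zero => intro _ h; simp [maxLetterL] at h; omega
  | succ j ih =>
    intro hj h
    have hjw : j < w.length := by omega
    have hle := hw.getElem_le hjw
    rw [← List.take_append_getElem hjw, maxLetterL_append] at h
    rw [← List.take_append_getElem hjw]
    by_cases hprev : x ≤ maxLetterL (w.take j)
    · exact List.mem_append_left _ (ih (by omega) hprev)
    · simp only [maxLetterL, List.foldr_cons, List.foldr_nil] at h hle hprev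
      exact List.mem_append_right _ (List.mem_singleton.2 (by omega))

theorem IsRGFL.mem_twiceLetters_iff (hw : IsRGFL w) {l : ℕ} :
    l ∈ twiceLetters w ↔ w.count l = 2 := by
  refine ⟨fun h => (mem_filter.1 h).2, fun h => mem_filter.2 ⟨?_, h⟩⟩
  have hl : l ∈ w := List.count_pos_iff.1 (by omega)
  exact mem_Icc.2 ⟨hw.one_le hl, le_maxLetterL hl⟩

theorem IsRGFL.length_eq (hw : IsRGFL w) (h2 : ∀ l, w.count l ≤ 2) :
    w.length = maxLetterL w + #(twiceLetters w) := by
  have htoFinset : w.toFinset = Icc 1 (maxLetterL w) := by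
    ext l
    rw [List.mem_toFinset, mem_Icc]
    exact ⟨fun h => ⟨hw.one_le h, le_maxLetterL h⟩,
      fun h => hw.mem_of_le_maxLetterL h.1 h.2⟩
  calc w.length = ∑ l ∈ Icc 1 (maxLetterL w), w.count l := by
        rw [← htoFinset, List.sum_toFinset_count_eq_length]
    _ = ∑ l ∈ Icc 1 (maxLetterL w), (1 + if w.count l = 2 then 1 else 0) := by
        refine sum_congr rfl fun l hl => ?_
        rw [mem_Icc] at hl
        have hpos := List.count_pos_iff.2 (hw.mem_of_le_maxLetterL hl.1 hl.2)
        have := h2 l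
        split_ifs <;> omega
    _ = maxLetterL w + #(twiceLetters w) := by
        rw [sum_add_distrib, twiceLetters, card_filter]
        simp

theorem IsRGFL.take_eq_range'_of_nodup (hw : IsRGFL w) {p : ℕ} (hp : p ≤ w.length)
    (hnd : (w.take p).Nodup) : w.take p = List.range' 1 p := by
  induction p with
  | zero => simp
  | succ p ih =>
    have hpw : p < w.length := by omega
    rw [← List.take_append_getElem hpw] at hnd ⊢
    obtain ⟨hnd, -, hne⟩ := List.nodup_append.1 hnd
    have ih := ih (by omega) hnd
    have hle := hw.getElem_le hpw
    have h1 := hw.one_le (List.getElem_mem hpw)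
    have hmax : maxLetterL (w.take p) ≤ p := by
      rw [ih]; exact maxLetterL_le fun x hx => by rw [List.mem_range'_1] at hx; omega
    have hnew : w[p] ∉ List.range' 1 p := fun h =>
      hne _ (ih ▸ h) _ (List.mem_singleton_self _) rfl
    rw [List.mem_range'_1] at hnew
    rw [ih, List.range'_concat, show w[p] = 1 + 1 * p by omega]

end RestrictedGrowth

section Maximizers

variable {w : List ℕ}

theorem mul_add_sub_add_mul_sub {k a b : ℕ} (hka : k ≤ a) (hab : a ≤ b) :
    k * (a + b - k) + (a - k) * (b - k) = a * b := by
  zify [hka, hka.trans hab, (by omega : k ≤ a + b)]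
  ring

theorem IsRGFL.two_mul_card_twiceLetters_le (hw : IsRGFL w) (h2 : ∀ l, w.count l ≤ 2) :
    2 * #(twiceLetters w) ≤ w.length := by
  have := hw.length_eq h2
  have := card_twiceLetters_le_maxLetterL w
  omega

theorem IsRGFL.spreadL_add_mul_le (hw : IsRGFL w) (h2 : ∀ l, w.count l ≤ 2) :
    spreadL w + (w.length / 2 - #(twiceLetters w)) * ((w.length + 1) / 2 - #(twiceLetters w)) ≤
      w.length / 2 * ((w.length + 1) / 2) := by
  have hk := hw.two_mul_card_twiceLetters_le h2
  have hid := mul_add_sub_add_mul_sub (k := #(twiceLetters w)) (a := w.length / 2)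
    (b := (w.length + 1) / 2) (by omega) (by omega)
  rw [show w.length / 2 + (w.length + 1) / 2 = w.length by omega] at hid
  exact hid ▸ Nat.add_le_add_right (spreadL_le_card_mul h2) _

theorem IsRGFL.spreadL_le (hw : IsRGFL w) (h2 : ∀ l, w.count l ≤ 2) :
    spreadL w ≤ w.length / 2 * ((w.length + 1) / 2) :=
  (Nat.le_add_right _ _).trans (hw.spreadL_add_mul_le h2)

theorem nodup_take_of_le_lastIdxL (h2 : ∀ l, w.count l ≤ 2) {b : ℕ}
    (hb : ∀ l, w.count l = 2 → b ≤ lastIdxL w l) : (w.take b).Nodup := by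
  rw [List.nodup_iff_count_le_one]
  intro l
  have hsplit : w.count l = (w.take b).count l + (w.drop b).count l := by
    rw [← List.count_append, List.take_append_drop]
  by_cases hc : w.count l = 2
  · have hl : l ∈ w := List.count_pos_iff.1 (by omega)
    have hlast := lastIdxL_lt_length hl
    have hdrop : l ∈ w.drop b := List.mem_drop_iff_getElem.2
      ⟨lastIdxL w l - b, by have := hb l hc; omega, by
        rw [← List.getD_eq_getElem _ 0, show b + (lastIdxL w l - b) = lastIdxL w l by
          have := hb l hc; omega, getD_lastIdxL hl]⟩
    have := List.count_pos_iff.2 hdrop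
    omega
  · have := h2 l
    omega

theorem getD_eq_add_one_of_take_eq_range' {b i : ℕ} (h : w.take b = List.range' 1 b)
    (hi : i < b) : w.getD i 0 = i + 1 := by
  have hlen : i < (w.take b).length := by rw [h, List.length_range']; exact hi
  rw [← List.take_append_drop b w, List.getD_append _ _ _ _ hlen, h,
    List.getD_eq_getElem _ _ (by simpa using hi), List.getElem_range']
  omega

theorem IsRGFL.drop_perm_range' (hw : IsRGFL w) (h2 : ∀ l, w.count l ≤ 2) {a b : ℕ}
    (hpre : w.take b = List.range' 1 b) (hmax : maxLetterL w = b)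
    (htwice : ∀ l, w.count l = 2 → l ≤ a) (hlen : w.length = b + a) :
    (w.drop b).Perm (List.range' 1 a) := by
  have hcount : ∀ x, w.count x = (List.range' 1 b).count x + (w.drop b).count x := by
    intro x; rw [← List.count_append, ← hpre, List.take_append_drop]
  have hdrop : ∀ x ∈ w.drop b, 1 ≤ x ∧ x ≤ a ∧ (w.drop b).count x = 1 := by
    intro x hx
    have hxw := List.mem_of_mem_drop hx
    have h1 := hw.one_le hxw
    have hxb := hmax ▸ le_maxLetterL hxw
    have hpos := List.count_pos_iff.2 hx
    have hx2 := h2 x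
    have hsplit := hcount x
    rw [List.count_range_1', if_pos (by omega)] at hsplit
    exact ⟨h1, htwice x (by omega), by omega⟩
  have hnd : (w.drop b).Nodup := List.nodup_iff_count_le_one.2 fun x => by
    by_cases hx : x ∈ w.drop b
    · exact (hdrop x hx).2.2.le
    · rw [List.count_eq_zero_of_not_mem hx]; omega
  refine (hnd.subperm fun x hx => ?_).perm_of_length_le (by simp [hlen])
  rw [List.mem_range'_1]
  have := hdrop x hx
  omega

theorem IsRGFL.card_twiceLetters_eq_of_spreadL_eq (hw : IsRGFL w) (h2 : ∀ l, w.count l ≤ 2)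
    (hs : spreadL w = w.length / 2 * ((w.length + 1) / 2)) :
    #(twiceLetters w) = w.length / 2 := by
  have hk := hw.two_mul_card_twiceLetters_le h2
  have hle := hw.spreadL_add_mul_le h2
  rw [hs, add_le_iff_nonpos_right, nonpos_iff_eq_zero, Nat.mul_eq_zero] at hle
  omega

theorem IsRGFL.eq_range'_append_of_spreadL_eq (hw : IsRGFL w) (h2 : ∀ l, w.count l ≤ 2)
    (hs : spreadL w = w.length / 2 * ((w.length + 1) / 2)) :
    ∃ σ : List ℕ, σ.Perm (List.range' 1 (w.length / 2)) ∧
      w = List.range' 1 ((w.length + 1) / 2) ++ σ := by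
  have hk := hw.card_twiceLetters_eq_of_spreadL_eq h2 hs
  obtain ⟨hF, hL⟩ := openers_eq_and_closers_eq_of_spreadL_eq h2 (by
    rw [hs, hk, show w.length - w.length / 2 = (w.length + 1) / 2 by omega])
  have hlen := hw.length_eq h2
  have hpre : w.take ((w.length + 1) / 2) = List.range' 1 ((w.length + 1) / 2) := by
    refine hw.take_eq_range'_of_nodup (by omega) (nodup_take_of_le_lastIdxL h2 fun l hl => ?_)
    have hlast : lastIdxL w l ∈ closers w :=
      mem_image_of_mem _ (hw.mem_twiceLetters_iff.2 hl)
    rw [hL, mem_Ico] at hlast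
    omega
  have htwice : ∀ l, w.count l = 2 → l ≤ w.length / 2 := by
    intro l hl
    have hfirst : firstIdxL w l ∈ openers w :=
      mem_image_of_mem _ (hw.mem_twiceLetters_iff.2 hl)
    rw [hF, mem_range] at hfirst
    have := getD_eq_add_one_of_take_eq_range' hpre
      (by omega : firstIdxL w l < (w.length + 1) / 2)
    rw [getD_firstIdxL (List.count_pos_iff.1 (by omega))] at this
    omega
  exact ⟨_, hw.drop_perm_range' h2 hpre (by omega) htwice (by omega),
    by rw [← hpre, List.take_append_drop]⟩

end Maximizers

section Canonical

variable {a b i : ℕ} {σ : List ℕ}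

theorem getD_range'_append (hi : i < b) : (List.range' 1 b ++ σ).getD i 0 = i + 1 :=
  getD_eq_add_one_of_take_eq_range' (List.take_left' (by simp)) hi

theorem isRGFL_range'_append (hσ : ∀ x ∈ σ, 1 ≤ x ∧ x ≤ b) :
    IsRGFL (List.range' 1 b ++ σ) := by
  intro i hi
  show _ ∧ _ ≤ maxLetterL _ + 1
  rw [List.length_append, List.length_range'] at hi
  by_cases hib : i < b
  · rw [getD_range'_append hib]
    refine ⟨by omega, ?_⟩
    rcases Nat.eq_zero_or_pos i with rfl | hpos
    · omega
    · have := getD_le_maxLetterL_take (w := List.range' 1 b ++ σ) (j := i - 1) (i := i)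
        (by omega) (by simp; omega)
      rw [getD_range'_append (by omega), Nat.sub_add_cancel hpos] at this
      omega
  · rw [List.getD_append_right _ _ _ _ (by simp; omega), List.length_range',
      List.getD_eq_getElem _ _ (by omega)]
    have hx := hσ _ (List.getElem_mem (l := σ) (n := i - b) (by omega))
    have := getD_le_maxLetterL_take (w := List.range' 1 b ++ σ) (j := b - 1) (i := i) (by omega)
      (by simp; omega)
    rw [getD_range'_append (by omega), Nat.sub_add_cancel (by omega)] at this
    omega

theorem count_range'_append (hσ : σ.Perm (List.range' 1 a)) (x : ℕ) :
    (List.range' 1 b ++ σ).count x =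
      (if 1 ≤ x ∧ x < 1 + b then 1 else 0) + (if 1 ≤ x ∧ x < 1 + a then 1 else 0) := by
  rw [List.count_append, hσ.count_eq, List.count_range_1', List.count_range_1']

theorem count_range'_append_le_two (hσ : σ.Perm (List.range' 1 a)) (x : ℕ) :
    (List.range' 1 b ++ σ).count x ≤ 2 := by
  rw [count_range'_append hσ]
  split_ifs <;> omega

theorem maxLetterL_range'_append (hσ : σ.Perm (List.range' 1 a)) (hab : a ≤ b) :
    maxLetterL (List.range' 1 b ++ σ) = b := by
  refine le_antisymm (maxLetterL_le fun x hx => ?_) ?_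
  · rw [List.mem_append, hσ.mem_iff, List.mem_range'_1, List.mem_range'_1] at hx
    omega
  · rcases Nat.eq_zero_or_pos b with hb | hb
    · omega
    · exact le_maxLetterL (List.mem_append_left _ (List.mem_range'_1.2 ⟨hb, by omega⟩))

theorem twiceLetters_range'_append (hσ : σ.Perm (List.range' 1 a)) (hab : a ≤ b) :
    twiceLetters (List.range' 1 b ++ σ) = Icc 1 a := by
  ext l
  rw [twiceLetters, mem_filter, maxLetterL_range'_append hσ hab, count_range'_append hσ,
    mem_Icc, mem_Icc]
  split_ifs <;> omega

theorem spreadL_range'_append (hσ : σ.Perm (List.range' 1 a)) (hab : a ≤ b) :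
    spreadL (List.range' 1 b ++ σ) = a * b := by
  set v := List.range' 1 b ++ σ
  have hσlen : σ.length = a := by simp [hσ.length_eq]
  have hlen : v.length = b + a := by simp [v, hσlen]
  have hT := twiceLetters_range'_append hσ hab
  have hF : openers v = range a := by
    refine eq_of_subset_of_card_le (fun i hi => ?_) (by rw [card_openers, hT]; simp)
    obtain ⟨l, hl, rfl⟩ := mem_image.1 hi
    rw [hT, mem_Icc] at hl
    have := firstIdxL_le (w := v) (i := l - 1) (l := l) (by omega)
      (by rw [getD_range'_append (by omega)]; omega)
    exact mem_range.2 (by omega)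
  have hL : closers v = Ico (b + a - a) (b + a) := by
    refine eq_of_subset_of_card_le (fun i hi => ?_) (by rw [card_closers, hT]; simp)
    obtain ⟨l, hl, rfl⟩ := mem_image.1 hi
    rw [hT, mem_Icc] at hl
    obtain ⟨j, hj, hσj⟩ :=
      List.getElem_of_mem (hσ.mem_iff.2 (List.mem_range'_1.2 ⟨hl.1, by omega⟩))
    have hv : v.getD (b + j) 0 = l := by
      rw [List.getD_append_right _ _ _ _ (by simp), List.length_range', Nat.add_sub_cancel_left,
        List.getD_eq_getElem _ _ hj, hσj]
    have := le_lastIdxL (w := v) (by simp [hlen]; omega) hv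
    have := lastIdxL_lt_length (hσj ▸ List.mem_append_right _ (List.getElem_mem hj) : l ∈ v)
    rw [mem_Ico]
    omega
  have hsum := spreadL_add_sum_openers (w := v) (count_range'_append_le_two hσ)
  rw [hF, hL, sum_Ico_sub_eq (by omega), Nat.add_sub_cancel] at hsum
  omega

end Canonical

/-- an RGF of length `n` in which no letter appears more than twice
maximizes spread over `R_n(123)` iff it has the form `1 2 … ⌈n/2⌉ σ`, with `σ` a
permutation of `{1, …, ⌊n/2⌋}`. -/
theorem spread_maximizer_iff (n : ℕ) (w : List ℕ) (hw : w.length = n)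
    (hrgf : IsRGFL w) (htwice : ∀ l : ℕ, w.count l ≤ 2) :
    (∀ v : List ℕ, v.length = n → IsRGFL v → (∀ l : ℕ, v.count l ≤ 2) →
        spreadL v ≤ spreadL w) ↔
      ∃ σ : List ℕ, σ.Perm (List.range' 1 (n / 2)) ∧
        w = List.range' 1 ((n + 1) / 2) ++ σ := by
  have hab : n / 2 ≤ (n + 1) / 2 := by omega
  constructor
  · intro hmax
    subst hw
    refine hrgf.eq_range'_append_of_spreadL_eq htwice (le_antisymm (hrgf.spreadL_le htwice) ?_)
    rw [← spreadL_range'_append (List.Perm.refl _) hab]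
    refine hmax _ (by simp; omega) (isRGFL_range'_append fun x hx => ?_)
      (count_range'_append_le_two (List.Perm.refl _))
    rw [List.mem_range'_1] at hx
    omega
  · rintro ⟨σ, hσ, rfl⟩ v hv hvrgf hv2
    rw [spreadL_range'_append hσ hab, ← hv]
    exact hvrgf.spreadL_le hv2

end
end

section
/- For n ≥ 2, SB_n(1/2/3, 13/2; q,t) = q^{n-1} t + (n-1) q^{n-2} t², i.e. the joint (spread, block) generating function over partitions of [n] avoiding both 1/2/3 and 13/2. -/
open scoped Classical
noncomputable section

/-- The joint generating function of spread and block over partitions of `[n]`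
avoiding both patterns `Q₁` and `Q₂`. -/
def SB2 {k₁ k₂ : ℕ} (n : ℕ) (Q₁ : SetPartition k₁) (Q₂ : SetPartition k₂) (q t : ℚ) : ℚ :=
  ∑ P ∈ Finset.univ.filter
      (fun P : SetPartition n => SPAvoids P Q₁ ∧ SPAvoids P Q₂),
    q ^ spread P * t ^ blockNum P

/-! The block of `0` is an initial interval `{0, …, m}`: an element `i < m` outside it would
give an occurrence `0 i m` of `13/2`. Any two elements outside that block lie in a common block,
since otherwise they would form, together with `0`, an occurrence of `1/2/3`. Hence the avoiding
partitions are the `n` partitions `{0, …, k-1}/{k, …, n-1}` with `1 ≤ k ≤ n` (one block when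
`k = n`), of spread `n - 2` with two blocks, resp. spread `n - 1` with one block. -/

section Patterns

variable {n : ℕ} {P : SetPartition n}

lemma strictMono_vecCons₃ {a b c : Fin n} (hab : a < b) (hbc : b < c) : StrictMono ![a, b, c] :=
  Fin.strictMono_iff_lt_succ.2 fun i => by fin_cases i <;> assumption

lemma rel_of_avoids_p13_2 (hP : SPAvoids P p13_2) {a b c : Fin n} (hab : a < b) (hbc : b < c)
    (hac : P.r a c) : P.r a b := by
  by_contra hnab
  have hnbc : ¬ P.r b c := fun h => hnab (P.trans' hac (P.symm' h))
  have hca := P.symm' hac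
  have hnba : ¬ P.r b a := fun h => hnab (P.symm' h)
  have hncb : ¬ P.r c b := fun h => hnbc (P.symm' h)
  refine hP ⟨![a, b, c], strictMono_vecCons₃ hab hbc, fun x y => ?_⟩
  unfold p13_2
  fin_cases x <;> fin_cases y <;> simp [hac, hca, hnab, hnba, hnbc, hncb]

lemma rel_of_avoids_p1_2_3 (hP : SPAvoids P p1_2_3) {a b c : Fin n} (hab : a < b) (hbc : b < c)
    (hnab : ¬ P.r a b) (hnac : ¬ P.r a c) : P.r b c := by
  by_contra hnbc
  have hnba : ¬ P.r b a := fun h => hnab (P.symm' h)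
  have hnca : ¬ P.r c a := fun h => hnac (P.symm' h)
  have hncb : ¬ P.r c b := fun h => hnbc (P.symm' h)
  refine hP ⟨![a, b, c], strictMono_vecCons₃ hab hbc, fun x y => ?_⟩
  unfold p1_2_3
  fin_cases x <;> fin_cases y <;> simp [hnab, hnba, hnac, hnca, hnbc, hncb]

end Patterns

section BlockBounds

variable {n : ℕ} {P : SetPartition n}

lemma blockMin_eq_of_isLeast {i : Fin n} {m : ℕ} (hm : ∃ h : m < n, P.r ⟨m, h⟩ i)
    (hle : ∀ j : Fin n, P.r j i → m ≤ j) : blockMin P i = m :=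
  IsLeast.csInf_eq ⟨hm, fun _ ⟨_, hj⟩ => hle _ hj⟩

lemma blockMax_eq_of_isGreatest {i : Fin n} {m : ℕ} (hm : ∃ h : m < n, P.r ⟨m, h⟩ i)
    (hle : ∀ j : Fin n, P.r j i → (j : ℕ) ≤ m) : blockMax P i = m :=
  IsGreatest.csSup_eq ⟨hm, fun _ ⟨_, hj⟩ => hle _ hj⟩

lemma bddAbove_block (i : Fin n) : BddAbove {j : ℕ | ∃ h : j < n, P.r ⟨j, h⟩ i} :=
  ⟨n, fun _ ⟨h, _⟩ => h.le⟩

lemma le_blockMax_of_rel {i j : Fin n} (h : P.r j i) : (j : ℕ) ≤ blockMax P i :=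
  le_csSup (bddAbove_block i) ⟨j.isLt, h⟩

lemma exists_rel_blockMax (i : Fin n) : ∃ h : blockMax P i < n, P.r ⟨blockMax P i, h⟩ i :=
  Nat.sSup_mem (s := {j : ℕ | ∃ h : j < n, P.r ⟨j, h⟩ i}) ⟨i, i.isLt, P.refl' i⟩
    (bddAbove_block i)

end BlockBounds

/-- `splitAt n k` is `{0, …, k-1}/{k, …, n-1}`; it has a single block when `k = 0` or
`n ≤ k`. -/
def splitAt (n k : ℕ) : SetPartition n := Setoid.ker fun i : Fin n => k ≤ (i : ℕ)

section SplitAt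

variable {n k : ℕ}

lemma splitAt_rel (a b : Fin n) :
    (splitAt n k).r a b ↔ (k ≤ (a : ℕ) ↔ k ≤ (b : ℕ)) := by
  rw [splitAt, Setoid.ker_def, eq_iff_iff]

lemma splitAt_avoids_p1_2_3 : SPAvoids (splitAt n k) p1_2_3 := by
  rintro ⟨f, -, hf⟩
  have h01 := hf 0 1
  have h02 := hf 0 2
  have h12 := hf 1 2
  rw [splitAt_rel] at h01 h02 h12
  unfold p1_2_3 at h01 h02 h12
  simp only [Setoid.ker_def, Matrix.cons_val_zero, Matrix.cons_val_one, Matrix.cons_val,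
    zero_ne_one, OfNat.zero_ne_ofNat, OfNat.one_ne_ofNat, false_iff] at h01 h02 h12
  tauto

lemma splitAt_avoids_p13_2 : SPAvoids (splitAt n k) p13_2 := by
  rintro ⟨f, hf, hr⟩
  have h01 := hr 0 1
  have h02 := hr 0 2
  rw [splitAt_rel] at h01 h02
  unfold p13_2 at h01 h02
  simp only [Setoid.ker_def, Matrix.cons_val_zero, Matrix.cons_val_one, Matrix.cons_val,
    zero_ne_one, false_iff, true_iff] at h01 h02
  have m01 : (f 0 : ℕ) < f 1 := hf (by decide)
  have m12 : (f 1 : ℕ) < f 2 := hf (by decide)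
  omega

lemma blockMin_splitAt (hk : 1 ≤ k) (hkn : k ≤ n + 1) (i : Fin (n + 1)) :
    blockMin (splitAt (n + 1) k) i = if (i : ℕ) < k then 0 else k := by
  split_ifs with hi
  · exact blockMin_eq_of_isLeast ⟨n.succ_pos, by rw [splitAt_rel, Fin.val_mk]; omega⟩
      fun _ _ => Nat.zero_le _
  · refine blockMin_eq_of_isLeast ⟨by omega, by rw [splitAt_rel, Fin.val_mk]; omega⟩
      fun j hj => ?_
    rw [splitAt_rel] at hj
    omega

lemma blockMax_splitAt (hkn : k ≤ n + 1) (i : Fin (n + 1)) :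
    blockMax (splitAt (n + 1) k) i = if (i : ℕ) < k then k - 1 else n := by
  split_ifs with hi
  · refine blockMax_eq_of_isGreatest ⟨by omega, by rw [splitAt_rel, Fin.val_mk]; omega⟩
      fun j hj => ?_
    rw [splitAt_rel] at hj
    omega
  · exact blockMax_eq_of_isGreatest ⟨n.lt_succ_self, by rw [splitAt_rel, Fin.val_mk]; omega⟩
      fun j _ => Nat.lt_succ_iff.1 j.isLt

lemma blockMax_splitAt_zero (hk : 1 ≤ k) (hkn : k ≤ n + 1) :
    blockMax (splitAt (n + 1) k) 0 = k - 1 := by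
  rw [blockMax_splitAt hkn, if_pos (by rw [Fin.val_zero]; omega)]

lemma splitAt_injOn : Set.InjOn (splitAt (n + 1)) (Finset.Icc 1 (n + 1) : Set ℕ) := by
  intro k hk k' hk' h
  simp only [Finset.coe_Icc, Set.mem_Icc] at hk hk'
  have h0 := congrArg (blockMax · 0) h
  simp only [blockMax_splitAt_zero hk.1 hk.2, blockMax_splitAt_zero hk'.1 hk'.2] at h0
  omega

lemma spread_splitAt_of_le (hk : 1 ≤ k) (hkn : k ≤ n) : spread (splitAt (n + 1) k) = n - 1 := by
  have hmins : Finset.univ.filter (fun i => blockMin (splitAt (n + 1) k) i = i) =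
      {0, ⟨k, by omega⟩} := by
    ext i
    simp only [Finset.mem_filter, Finset.mem_univ, true_and, Finset.mem_insert,
      Finset.mem_singleton, blockMin_splitAt hk (Nat.le_succ_of_le hkn), Fin.ext_iff,
      Fin.val_zero]
    split_ifs <;> omega
  rw [spread, hmins, Finset.sum_pair (by rw [ne_eq, Fin.ext_iff, Fin.val_zero, Fin.val_mk]; omega),
    blockMax_splitAt_zero hk (Nat.le_succ_of_le hkn), blockMax_splitAt (Nat.le_succ_of_le hkn),
    if_neg (lt_irrefl k)]
  simp only [Fin.val_zero]
  omega

lemma spread_splitAt_self : spread (splitAt (n + 1) (n + 1)) = n := by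
  have hmins : Finset.univ.filter (fun i => blockMin (splitAt (n + 1) (n + 1)) i = i) = {0} := by
    ext i
    simp only [Finset.mem_filter, Finset.mem_univ, true_and, Finset.mem_singleton,
      blockMin_splitAt n.succ_pos le_rfl, if_pos i.isLt, Fin.ext_iff, Fin.val_zero, eq_comm]
  rw [spread, hmins, Finset.sum_singleton, blockMax_splitAt_zero n.succ_pos le_rfl]
  rfl

lemma blockNum_splitAt_of_le (hk : 1 ≤ k) (hkn : k ≤ n) : blockNum (splitAt (n + 1) k) = 2 := by
  set P := splitAt (n + 1) k
  have himage : Finset.univ.image (Quotient.mk P) =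
      {Quotient.mk P 0, Quotient.mk P ⟨k, by omega⟩} := by
    ext x
    simp only [Finset.mem_image, Finset.mem_univ, true_and, Finset.mem_insert,
      Finset.mem_singleton]
    constructor
    · rintro ⟨i, rfl⟩
      simp only [Quotient.eq, P, splitAt_rel, Fin.val_zero]
      omega
    · rintro (rfl | rfl) <;> exact ⟨_, rfl⟩
  rw [blockNum, himage, Finset.card_pair]
  simp only [ne_eq, Quotient.eq, P, splitAt_rel, Fin.val_zero]
  omega

lemma blockNum_splitAt_self : blockNum (splitAt (n + 1) (n + 1)) = 1 := by
  set P := splitAt (n + 1) (n + 1)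
  have himage : Finset.univ.image (Quotient.mk P) = {Quotient.mk P 0} := by
    ext x
    simp only [Finset.mem_image, Finset.mem_univ, true_and, Finset.mem_singleton]
    constructor
    · rintro ⟨i, rfl⟩
      simp only [Quotient.eq, P, splitAt_rel, Fin.val_zero]
      omega
    · rintro rfl
      exact ⟨_, rfl⟩
  rw [blockNum, himage, Finset.card_singleton]

end SplitAt

section Characterization

variable {n : ℕ} {P : SetPartition (n + 1)}

lemma rel_zero_iff_le_blockMax (hP : SPAvoids P p13_2) (i : Fin (n + 1)) :
    P.r i 0 ↔ (i : ℕ) ≤ blockMax P 0 := by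
  refine ⟨le_blockMax_of_rel, fun hi => ?_⟩
  obtain ⟨hm, hrel⟩ := exists_rel_blockMax (P := P) 0
  rcases eq_or_ne i 0 with rfl | hi0
  · exact P.refl' 0
  rcases hi.eq_or_lt with him | him
  · rwa [show i = ⟨blockMax P 0, hm⟩ from Fin.ext him]
  · exact P.symm' (rel_of_avoids_p13_2 hP (Fin.pos_iff_ne_zero.2 hi0) him (P.symm' hrel))

lemma rel_of_not_rel_zero (hP : SPAvoids P p1_2_3) {a b : Fin (n + 1)} (ha : ¬ P.r a 0)
    (hb : ¬ P.r b 0) : P.r a b := by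
  have ha0 : 0 < a := Fin.pos_iff_ne_zero.2 fun h => ha (h ▸ P.refl' 0)
  have hb0 : 0 < b := Fin.pos_iff_ne_zero.2 fun h => hb (h ▸ P.refl' 0)
  rcases lt_trichotomy a b with hab | rfl | hab
  · exact rel_of_avoids_p1_2_3 hP ha0 hab (ha ∘ P.symm') (hb ∘ P.symm')
  · exact P.refl' a
  · exact P.symm' (rel_of_avoids_p1_2_3 hP hb0 hab (hb ∘ P.symm') (ha ∘ P.symm'))

lemma eq_splitAt_of_avoids (h₁ : SPAvoids P p1_2_3) (h₂ : SPAvoids P p13_2) :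
    P = splitAt (n + 1) (blockMax P 0 + 1) := by
  refine Setoid.ext fun a b => ?_
  have ha := rel_zero_iff_le_blockMax h₂ a
  have hb := rel_zero_iff_le_blockMax h₂ b
  rw [splitAt_rel]
  by_cases hra : P.r a 0
  · have : P.r a b ↔ P.r b 0 :=
      ⟨fun h => P.trans' (P.symm' h) hra, fun h => P.trans' hra (P.symm' h)⟩
    rw [this, hb]
    rw [ha] at hra
    omega
  by_cases hrb : P.r b 0
  · have : P.r a b ↔ P.r a 0 := ⟨fun h => P.trans' h hrb, fun h => P.trans' h (P.symm' hrb)⟩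
    rw [this, ha]
    rw [hb] at hrb
    omega
  · rw [ha] at hra
    rw [hb] at hrb
    simp only [rel_of_not_rel_zero h₁ (ha.not.2 hra) (hb.not.2 hrb), true_iff]
    omega

lemma avoids_p1_2_3_and_p13_2_iff :
    SPAvoids P p1_2_3 ∧ SPAvoids P p13_2 ↔
      ∃ k ∈ Finset.Icc 1 (n + 1), splitAt (n + 1) k = P := by
  constructor
  · rintro ⟨h₁, h₂⟩
    obtain ⟨hm, -⟩ := exists_rel_blockMax (P := P) 0
    exact ⟨blockMax P 0 + 1, Finset.mem_Icc.2 ⟨by omega, hm⟩,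
      (eq_splitAt_of_avoids h₁ h₂).symm⟩
  · rintro ⟨k, -, rfl⟩
    exact ⟨splitAt_avoids_p1_2_3, splitAt_avoids_p13_2⟩

end Characterization

/-- the joint generating function over `Π_n(1/2/3, 13/2)` for `n ≥ 2`. -/
theorem SB2_1_2_3_13_2 (n : ℕ) (hn : 2 ≤ n) (q t : ℚ) :
    SB2 n p1_2_3 p13_2 q t = q ^ (n - 1) * t + (n - 1) * q ^ (n - 2) * t ^ 2 := by
  obtain ⟨m, rfl⟩ : ∃ m, n = m + 1 := ⟨n - 1, by omega⟩
  have hfilter : Finset.univ.filter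
      (fun P : SetPartition (m + 1) => SPAvoids P p1_2_3 ∧ SPAvoids P p13_2) =
      (Finset.Icc 1 (m + 1)).image (splitAt (m + 1)) := by
    ext P
    simp only [Finset.mem_filter, Finset.mem_univ, true_and, Finset.mem_image,
      avoids_p1_2_3_and_p13_2_iff]
  have htwo : ∀ k ∈ Finset.Icc 1 m,
      q ^ spread (splitAt (m + 1) k) * t ^ blockNum (splitAt (m + 1) k) = q ^ (m - 1) * t ^ 2 :=
    fun k hk => by
      rw [Finset.mem_Icc] at hk
      rw [spread_splitAt_of_le hk.1 hk.2, blockNum_splitAt_of_le hk.1 hk.2]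
  rw [SB2, hfilter, Finset.sum_image splitAt_injOn, Finset.sum_Icc_succ_top (by omega),
    Finset.sum_congr rfl htwo, Finset.sum_const, Nat.card_Icc, nsmul_eq_mul,
    spread_splitAt_self, blockNum_splitAt_self]
  push_cast
  ring

end
end

section
/- Let G_n(q,t) = SB_n(13/2, 123; q,t) be the joint generating function of spread and block over partitions of [n] avoiding 13/2 and 123. Then G₀ = 1, G₁ = t, and G_n = t·G_{n-1} + q·t·G_{n-2} for n ≥ 2. In particular |Π_n(13/2,123)| is the n-th Fibonacci number. -/
open scoped Classical
noncomputable section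

/-!
Avoiding `13/2` and `123` forces related points to be adjacent, so the blocks are singletons and
pairs `{i, i + 1}`: the partition is a monomer–dimer tiling of `[n]`. It is determined by the set
of left ends of its pairs, which is an arbitrary subset of `{0, …, n - 2}` without two consecutive
elements; each pair adds `1` to the spread and removes one block. Splitting these sets according
to whether they contain `n - 2` gives `G_n = t G_{n-1} + q t G_{n-2}`.
-/

open Finset

section Partitions

variable {n : ℕ}

lemma blockMin_eq_self {P : SetPartition n} {i : Fin n} (h : ∀ j, P.r j i → i ≤ j) :
    blockMin P i = i :=
  IsLeast.csInf_eq ⟨⟨i.isLt, P.refl i⟩, fun j ⟨hj, hr⟩ => h ⟨j, hj⟩ hr⟩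

lemma blockMax_mem (P : SetPartition n) (i : Fin n) :
    ∃ h : blockMax P i < n, P.r ⟨blockMax P i, h⟩ i :=
  Nat.sSup_mem (s := {j | ∃ h : j < n, P.r ⟨j, h⟩ i}) ⟨i, i.isLt, P.refl i⟩
    ⟨n, fun _ ⟨h, _⟩ => h.le⟩

lemma blockMax_congr {P : SetPartition n} {i j : Fin n} (h : P.r i j) :
    blockMax P i = blockMax P j := by
  unfold blockMax
  congr 1
  ext k
  exact ⟨fun ⟨hk, hr⟩ => ⟨hk, P.trans hr h⟩,
    fun ⟨hk, hr⟩ => ⟨hk, P.trans hr (P.symm h)⟩⟩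

lemma blockNum_eq_card_blockMax_eq_self (P : SetPartition n) :
    blockNum P = #{i | blockMax P i = i} := by
  symm
  apply card_bij (fun i _ => Quotient.mk P i)
  · exact fun i _ => mem_image_of_mem _ (mem_univ i)
  · intro i hi j hj hij
    simp only [mem_filter, mem_univ, true_and] at hi hj
    exact Fin.ext (hi ▸ hj ▸ blockMax_congr (Quotient.exact hij))
  · intro c hc
    obtain ⟨i, -, rfl⟩ := mem_image.mp hc
    obtain ⟨hm, hr⟩ := blockMax_mem P i
    exact ⟨⟨blockMax P i, hm⟩, by simpa using blockMax_congr hr, Quotient.sound hr⟩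

end Partitions

section MonomerDimer

variable {n : ℕ}

/-- Every block is a singleton or a pair `{i, i + 1}`. -/
def IsMonomerDimer (P : SetPartition n) : Prop :=
  ∀ i j : Fin n, P.r i j → (i : ℕ) ≤ j + 1

def pairStarts (P : SetPartition n) : Finset (Fin n) :=
  {i | ∃ j : Fin n, (i : ℕ) + 1 = j ∧ P.r i j}

lemma mem_pairStarts {P : SetPartition n} {i : Fin n} :
    i ∈ pairStarts P ↔ ∃ j : Fin n, (i : ℕ) + 1 = j ∧ P.r i j := by
  simp [pairStarts]

lemma spContains_of_lt_of_lt {P : SetPartition n} {Q : SetPartition 3} {i j k : Fin n}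
    (hij : i < j) (hjk : j < k) (h01 : Q.r 0 1 ↔ P.r i j) (h12 : Q.r 1 2 ↔ P.r j k)
    (h02 : Q.r 0 2 ↔ P.r i k) : SPContains P Q := by
  refine ⟨![i, j, k], Fin.strictMono_iff_lt_succ.mpr fun a => by fin_cases a <;> assumption, ?_⟩
  intro a b
  fin_cases a <;> fin_cases b <;>
    simp only [Fin.zero_eta, Fin.mk_one, Fin.reduceFinMk, Matrix.cons_val] <;>
    first
    | exact iff_of_true (Q.refl _) (P.refl _)
    | assumption
    | exact Q.comm.trans (h01.trans P.comm) | exact Q.comm.trans (h12.trans P.comm)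
    | exact Q.comm.trans (h02.trans P.comm)

lemma isMonomerDimer_of_avoids {P : SetPartition n} (h13_2 : SPAvoids P p13_2)
    (h123 : SPAvoids P p123) : IsMonomerDimer P := by
  intro i k hik
  by_contra! hki
  let j : Fin n := ⟨k + 1, by omega⟩
  have hkj : k < j := Fin.lt_def.mpr (by simp [j])
  have hji : j < i := Fin.lt_def.mpr (by simp [j]; omega)
  have hki' := P.symm hik
  by_cases hr : P.r k j
  · exact h123 <| spContains_of_lt_of_lt hkj hji (iff_of_true rfl hr)
      (iff_of_true rfl (P.trans (P.symm hr) hki')) (iff_of_true rfl hki')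
  · have h01 : ¬ p13_2.r 0 1 := by unfold p13_2; simp [Setoid.ker_def]
    have h12 : ¬ p13_2.r 1 2 := by unfold p13_2; simp [Setoid.ker_def]
    exact h13_2 <| spContains_of_lt_of_lt hkj hji (iff_of_false h01 hr)
      (iff_of_false h12 fun h => hr (P.trans hki' (P.symm h))) (iff_of_true rfl hki')

lemma IsMonomerDimer.not_spContains {P : SetPartition n} (hP : IsMonomerDimer P)
    {Q : SetPartition 3} (hQ : Q.r 0 2) : ¬ SPContains P Q := by
  rintro ⟨f, hf, hfQ⟩
  have h01 : f 0 < f 1 := hf (by decide)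
  have h12 : f 1 < f 2 := hf (by decide)
  have := hP _ _ (P.symm ((hfQ 0 2).mp hQ))
  rw [Fin.lt_def] at h01 h12
  omega

lemma avoids_13_2_and_123_iff (P : SetPartition n) :
    SPAvoids P p13_2 ∧ SPAvoids P p123 ↔ IsMonomerDimer P :=
  ⟨fun h => isMonomerDimer_of_avoids h.1 h.2,
    fun hP => ⟨hP.not_spContains rfl, hP.not_spContains rfl⟩⟩

end MonomerDimer

namespace IsMonomerDimer

variable {n : ℕ} {P : SetPartition n}

lemma blockMax_eq (hP : IsMonomerDimer P) (i : Fin n) :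
    blockMax P i = if i ∈ pairStarts P then (i : ℕ) + 1 else i := by
  refine IsGreatest.csSup_eq ?_
  split_ifs with hi
  · obtain ⟨j, hij, hr⟩ := mem_pairStarts.mp hi
    exact ⟨⟨hij ▸ j.isLt, by simpa [hij] using P.symm hr⟩, fun _ ⟨_, hkr⟩ => hP _ _ hkr⟩
  · refine ⟨⟨i.isLt, P.refl i⟩, fun k ⟨hk, hkr⟩ => ?_⟩
    have : k ≤ i + 1 := hP _ _ hkr
    by_contra! hik
    exact hi (mem_pairStarts.mpr ⟨⟨k, hk⟩, by simp; omega, P.symm hkr⟩)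

lemma blockMin_eq_self (hP : IsMonomerDimer P) {i : Fin n} (hi : i ∈ pairStarts P) :
    blockMin P i = i := by
  obtain ⟨j, hij, hr⟩ := mem_pairStarts.mp hi
  refine _root_.blockMin_eq_self fun k hk => ?_
  have := hP j k (P.trans (P.symm hr) (P.symm hk))
  rw [Fin.le_def]
  omega

lemma spread_eq (hP : IsMonomerDimer P) : spread P = #(pairStarts P) := by
  have hsum : ∀ i ∈ ({i | blockMin P i = i} : Finset (Fin n)),
      blockMax P i - i = if i ∈ pairStarts P then 1 else 0 := by
    intro i _
    rw [hP.blockMax_eq]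
    split_ifs <;> omega
  rw [spread, sum_congr rfl hsum, sum_boole, Nat.cast_id, filter_mem_eq_inter,
    inter_eq_right.mpr fun i hi => by simpa using hP.blockMin_eq_self hi]

lemma blockNum_eq (hP : IsMonomerDimer P) : blockNum P = n - #(pairStarts P) := by
  have hmax : ({i | blockMax P i = i} : Finset (Fin n)) = (pairStarts P)ᶜ := by
    ext i
    rw [mem_filter, hP.blockMax_eq]
    split_ifs with hi <;> simp [hi]
  rw [blockNum_eq_card_blockMax_eq_self, hmax, card_compl, Fintype.card_fin]

lemma rel_iff (hP : IsMonomerDimer P) {i j : Fin n} :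
    P.r i j ↔ i = j ∨ (i ∈ pairStarts P ∧ (i : ℕ) + 1 = j) ∨
      (j ∈ pairStarts P ∧ (j : ℕ) + 1 = i) := by
  constructor
  · intro hr
    have hij := hP i j hr
    have hji := hP j i (P.symm hr)
    rcases lt_trichotomy (i : ℕ) j with hlt | heq | hgt
    · exact .inr (.inl ⟨mem_pairStarts.mpr ⟨j, by omega, hr⟩, by omega⟩)
    · exact .inl (Fin.ext heq)
    · exact .inr (.inr ⟨mem_pairStarts.mpr ⟨i, by omega, P.symm hr⟩, by omega⟩)
  · rintro (rfl | ⟨hi, hij⟩ | ⟨hj, hji⟩)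
    · exact P.refl i
    · obtain ⟨k, hik, hr⟩ := mem_pairStarts.mp hi
      rwa [Fin.ext (hik.symm.trans hij)] at hr
    · obtain ⟨k, hjk, hr⟩ := mem_pairStarts.mp hj
      rw [Fin.ext (hjk.symm.trans hji)] at hr
      exact P.symm hr

end IsMonomerDimer

section SparseSubsets

def sparseSubsets (m : ℕ) : Finset (Finset ℕ) :=
  (range m).powerset.filter fun S => ∀ p ∈ S, p + 1 ∉ S

variable {m : ℕ} {S : Finset ℕ}

lemma mem_sparseSubsets : S ∈ sparseSubsets m ↔ S ⊆ range m ∧ ∀ p ∈ S, p + 1 ∉ S := by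
  simp [sparseSubsets]

lemma sparseSubsets_zero : sparseSubsets 0 = {∅} := by
  ext S
  simp +contextual [mem_sparseSubsets, subset_empty]

lemma card_le_of_mem_sparseSubsets (hS : S ∈ sparseSubsets m) : #S ≤ m := by
  simpa using card_le_card (mem_sparseSubsets.mp hS).1

lemma notMem_of_mem_sparseSubsets {k : ℕ} (hS : S ∈ sparseSubsets m) (hk : m ≤ k) : k ∉ S :=
  fun h => by have := (mem_sparseSubsets.mp hS).1 h; simp at this; omega

lemma sparseSubsets_succ (m : ℕ) :
    sparseSubsets (m + 1) = sparseSubsets m ∪ (sparseSubsets (m - 1)).image (insert m) := by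
  ext S
  simp only [mem_union, mem_image, mem_sparseSubsets, subset_iff, mem_range]
  constructor
  · rintro ⟨hlt, hsp⟩
    by_cases hm : m ∈ S
    · refine .inr ⟨S.erase m, ⟨fun p hp => ?_, fun p hp hp1 => ?_⟩, insert_erase hm⟩
      · have := hlt (mem_of_mem_erase hp)
        have : p + 1 ≠ m := fun h => hsp p (mem_of_mem_erase hp) (h ▸ hm)
        have := ne_of_mem_erase hp
        omega
      · exact hsp p (mem_of_mem_erase hp) (mem_of_mem_erase hp1)
    · refine .inl ⟨fun p hp => ?_, hsp⟩
      have := hlt hp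
      have : p ≠ m := fun h => hm (h ▸ hp)
      omega
  · rintro (⟨hlt, hsp⟩ | ⟨T, ⟨hlt, hsp⟩, rfl⟩)
    · exact ⟨fun p hp => by have := hlt hp; omega, hsp⟩
    · refine ⟨fun p hp => ?_, fun p hp hp1 => ?_⟩
      · rcases mem_insert.mp hp with rfl | hp
        · omega
        · have := hlt hp; omega
      · rcases mem_insert.mp hp with rfl | hp <;> rcases mem_insert.mp hp1 with h | hp1
        · omega
        · have := hlt hp1; omega
        · have := hlt hp; omega
        · exact hsp p hp hp1

end SparseSubsets

section SparseGF

variable {R : Type*} [CommSemiring R]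

/-- `S` marks the left cells of the dimers in a monomer–dimer tiling of `n` cells: `q` counts
dimers and `t` counts tiles. -/
def sparseGF (n : ℕ) (q t : R) : R :=
  ∑ S ∈ sparseSubsets (n - 1), q ^ #S * t ^ (n - #S)

lemma sparseGF_zero (q t : R) : sparseGF 0 q t = 1 := by
  simp [sparseGF, sparseSubsets_zero]

lemma sparseGF_one (q t : R) : sparseGF 1 q t = t := by
  simp [sparseGF, sparseSubsets_zero]

lemma sparseGF_add_two (n : ℕ) (q t : R) :
    sparseGF (n + 2) q t = t * sparseGF (n + 1) q t + q * t * sparseGF n q t := by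
  have hdisj : Disjoint (sparseSubsets n) ((sparseSubsets (n - 1)).image (insert n)) := by
    refine disjoint_left.mpr fun S hS hS' => notMem_of_mem_sparseSubsets hS le_rfl ?_
    obtain ⟨T, -, rfl⟩ := mem_image.mp hS'
    exact mem_insert_self n T
  have hinj : Set.InjOn (insert n) (sparseSubsets (n - 1) : Set (Finset ℕ)) := by
    intro T hT U hU h
    rw [← erase_insert (notMem_of_mem_sparseSubsets hT (n.sub_le 1)), h,
      erase_insert (notMem_of_mem_sparseSubsets hU (n.sub_le 1))]
  rw [sparseGF, show n + 2 - 1 = n + 1 from rfl, sparseSubsets_succ, sum_union hdisj,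
    sum_image hinj, sparseGF, sparseGF, Nat.add_sub_cancel, mul_sum, mul_sum]
  congr 1
  · refine sum_congr rfl fun S hS => ?_
    rw [show n + 2 - #S = n + 1 - #S + 1 by have := card_le_of_mem_sparseSubsets hS; omega]
    ring
  · refine sum_congr rfl fun T hT => ?_
    have := card_le_of_mem_sparseSubsets hT
    rw [card_insert_of_notMem (notMem_of_mem_sparseSubsets hT (n.sub_le 1)),
      show n + 2 - (#T + 1) = n - #T + 1 by omega]
    ring

lemma sparseGF_one_one (n : ℕ) : sparseGF n (1 : ℕ) 1 = Nat.fib (n + 1) := by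
  induction n using Nat.twoStepInduction with
  | zero => simp [sparseGF_zero]
  | one => simp [sparseGF_one]
  | more n ih₀ ih₁ =>
    rw [sparseGF_add_two, ih₀, ih₁, one_mul, one_mul, one_mul, Nat.fib_add_two (n := n + 1),
      add_comm]

end SparseGF

section Encoding

variable {n : ℕ}

lemma IsMonomerDimer.map_pairStarts_mem_sparseSubsets {P : SetPartition n}
    (hP : IsMonomerDimer P) : (pairStarts P).map Fin.valEmbedding ∈ sparseSubsets (n - 1) := by
  refine mem_sparseSubsets.mpr ⟨fun p hp => ?_, fun p hp hp1 => ?_⟩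
  · obtain ⟨i, hi, rfl⟩ := mem_map.mp hp
    obtain ⟨j, hij, -⟩ := mem_pairStarts.mp hi
    simp only [Fin.valEmbedding_apply, mem_range]
    omega
  · obtain ⟨i, hi, rfl⟩ := mem_map.mp hp
    obtain ⟨j, hj, hji⟩ := mem_map.mp hp1
    obtain ⟨j', hij', hr⟩ := mem_pairStarts.mp hi
    obtain ⟨k, hjk, hr'⟩ := mem_pairStarts.mp hj
    simp only [Fin.valEmbedding_apply] at hji
    obtain rfl : j = j' := Fin.ext (by omega)
    have := hP k i (P.symm (P.trans hr hr'))
    omega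

/-- Each point is labelled by the least element of its block (at `i = 0` both branches give
`0`). -/
def monomerDimerOf (n : ℕ) (S : Finset ℕ) : SetPartition n :=
  Setoid.ker fun i : Fin n => if (i : ℕ) - 1 ∈ S then (i : ℕ) - 1 else i

lemma isMonomerDimer_monomerDimerOf (S : Finset ℕ) : IsMonomerDimer (monomerDimerOf n S) := by
  intro i j h
  have := Setoid.ker_def.mp h
  split_ifs at this <;> omega

lemma map_pairStarts_monomerDimerOf {S : Finset ℕ} (hS : S ∈ sparseSubsets (n - 1)) :
    (pairStarts (monomerDimerOf n S)).map Fin.valEmbedding = S := by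
  obtain ⟨hlt, hsp⟩ := mem_sparseSubsets.mp hS
  ext p
  simp only [mem_map, Fin.valEmbedding_apply, mem_pairStarts, monomerDimerOf,
    Setoid.ker_def]
  constructor
  · rintro ⟨i, ⟨j, hij, hr⟩, rfl⟩
    rw [← hij, Nat.add_sub_cancel] at hr
    split_ifs at hr <;> first | assumption | omega
  · intro hp
    have := mem_range.mp (hlt hp)
    have hp0 : p - 1 ∈ S → p = 0 := fun h => by
      by_contra hp0
      exact hsp _ h (by rwa [Nat.sub_add_cancel (Nat.pos_of_ne_zero hp0)])
    refine ⟨⟨p, by omega⟩, ⟨⟨p + 1, by omega⟩, rfl, ?_⟩, rfl⟩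
    simp only [Nat.add_sub_cancel, if_pos hp]
    split_ifs with h
    · have := hp0 h
      omega
    · rfl

lemma sum_filter_isMonomerDimer {M : Type*} [AddCommMonoid M] (f : Finset ℕ → M) :
    ∑ P ∈ univ.filter (IsMonomerDimer (n := n)), f ((pairStarts P).map Fin.valEmbedding) =
      ∑ S ∈ sparseSubsets (n - 1), f S := by
  have himage : (univ.filter (IsMonomerDimer (n := n))).image
      (fun P => (pairStarts P).map Fin.valEmbedding) = sparseSubsets (n - 1) := by
    ext S
    simp only [mem_image, mem_filter, mem_univ, true_and]
    exact ⟨fun ⟨P, hP, hPS⟩ => hPS ▸ hP.map_pairStarts_mem_sparseSubsets,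
      fun hS => ⟨_, isMonomerDimer_monomerDimerOf S, map_pairStarts_monomerDimerOf hS⟩⟩
  rw [← himage, sum_image]
  intro P hP Q hQ h
  have hPQ : pairStarts P = pairStarts Q := map_injective _ h
  simp only [coe_filter, mem_univ, true_and, Set.mem_ofPred_eq] at hP hQ
  exact Setoid.ext fun i j => by rw [hP.rel_iff, hQ.rel_iff, hPQ]

end Encoding

lemma filter_avoids_13_2_and_123 (n : ℕ) :
    univ.filter (fun P : SetPartition n => SPAvoids P p13_2 ∧ SPAvoids P p123) =
      univ.filter IsMonomerDimer :=
  filter_congr fun P _ => avoids_13_2_and_123_iff P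

lemma SB2_13_2_123_eq_sparseGF (n : ℕ) (q t : ℚ) : SB2 n p13_2 p123 q t = sparseGF n q t := by
  rw [SB2, filter_avoids_13_2_and_123, sparseGF,
    ← sum_filter_isMonomerDimer fun S => q ^ #S * t ^ (n - #S)]
  refine sum_congr rfl fun P hP => ?_
  have hP := (mem_filter.mp hP).2
  rw [card_map, hP.spread_eq, hP.blockNum_eq]

lemma card_avoiding_13_2_and_123 (n : ℕ) :
    #(univ.filter fun P : SetPartition n => SPAvoids P p13_2 ∧ SPAvoids P p123) =
      Nat.fib (n + 1) := by
  rw [filter_avoids_13_2_and_123, ← sparseGF_one_one, card_eq_sum_ones,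
    sum_filter_isMonomerDimer fun _ => 1, sparseGF]
  simp

/-- the Fibonacci recursion for `G_n(q,t) = SB_n(13/2, 123; q,t)`, and
`|Π_n(13/2, 123)|` is the `n`-th Fibonacci number. -/
theorem SB2_13_2_123_fib :
    (∀ q t : ℚ, SB2 0 p13_2 p123 q t = 1) ∧
    (∀ q t : ℚ, SB2 1 p13_2 p123 q t = t) ∧
    (∀ n : ℕ, 2 ≤ n → ∀ q t : ℚ,
      SB2 n p13_2 p123 q t =
        t * SB2 (n - 1) p13_2 p123 q t + q * t * SB2 (n - 2) p13_2 p123 q t) ∧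
    (∀ n : ℕ,
      (Finset.univ.filter
        (fun P : SetPartition n => SPAvoids P p13_2 ∧ SPAvoids P p123)).card =
          Nat.fib (n + 1)) := by
  simp only [SB2_13_2_123_eq_sparseGF]
  refine ⟨sparseGF_zero, sparseGF_one, fun n hn q t => ?_, card_avoiding_13_2_and_123⟩
  obtain ⟨m, rfl⟩ := Nat.exists_eq_add_of_le' hn
  exact sparseGF_add_two m q t

end
end
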